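/- arXiv:1907.04465 — 2 statements merged into one kernel-verified Lean document; each statement's English description precedes it below -/
import Mathlib

section
/- Let k, a, b, c ∈ ℝ and assume g(0,0) = g_x(0,0) = g_y(0,0) = 0, g_{xx}(0,0) = k + 1/2, g_{yy}(0,0) = k, g_{xy}(0,0) = 0, g_{xxy}(0,0) = 0, g_{xxx}(0,0) = a, g_{xyy}(0,0) = b, g_{yyy}(0,0) = c. Let η be a C¹ map from a neighbourhood of the origin to ℝ⁴ with ⟨η, ξ⟩ = 1, ⟨η, η⟩ = 0, ⟨η, Φ_x⟩ = ⟨η, Φ_y⟩ = 0. Then A, B, C vanish at the origin and ∇A(0,0) = (0, b), ∇B(0,0) = (a − b, −c), ∇C(0,0) = (0, −b); i.e. the 1-jet of the differential equation of η-principal curvature lines is b y dy² + ((a − b)x − c y)dx dy − b y dx². -/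
noncomputable section

/-- The Minkowski scalar product `⟨u,v⟩ = −u₀v₀ + u₁v₁ + u₂v₂ + u₃v₃` on `ℝ⁴₁`. -/
def mink (u v : Fin 4 → ℝ) : ℝ :=
  -(u 0 * v 0) + u 1 * v 1 + u 2 * v 2 + u 3 * v 3

/-- Partial derivative in the `x`-direction. -/
def pdx {E : Type*} [NormedAddCommGroup E] [NormedSpace ℝ E]
    (f : ℝ × ℝ → E) (p : ℝ × ℝ) : E := fderiv ℝ f p (1, 0)

/-- Partial derivative in the `y`-direction. -/
def pdy {E : Type*} [NormedAddCommGroup E] [NormedSpace ℝ E]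
    (f : ℝ × ℝ → E) (p : ℝ × ℝ) : E := fderiv ℝ f p (0, 1)

/-- First fundamental form coefficient `E = ⟨Φ_x, Φ_x⟩`. -/
def EcoefP (Φ : ℝ × ℝ → (Fin 4 → ℝ)) (p : ℝ × ℝ) : ℝ := mink (pdx Φ p) (pdx Φ p)

/-- First fundamental form coefficient `F = ⟨Φ_x, Φ_y⟩`. -/
def FcoefP (Φ : ℝ × ℝ → (Fin 4 → ℝ)) (p : ℝ × ℝ) : ℝ := mink (pdx Φ p) (pdy Φ p)

/-- First fundamental form coefficient `G = ⟨Φ_y, Φ_y⟩`. -/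
def GcoefP (Φ : ℝ × ℝ → (Fin 4 → ℝ)) (p : ℝ × ℝ) : ℝ := mink (pdy Φ p) (pdy Φ p)

/-- Screen second fundamental form coefficient `e_η = ⟨Φ_xx, η⟩`. -/
def eEtaP (Φ η : ℝ × ℝ → (Fin 4 → ℝ)) (p : ℝ × ℝ) : ℝ := mink (pdx (pdx Φ) p) (η p)

/-- Screen second fundamental form coefficient `f_η = ⟨Φ_xy, η⟩`. -/
def fEtaP (Φ η : ℝ × ℝ → (Fin 4 → ℝ)) (p : ℝ × ℝ) : ℝ := mink (pdx (pdy Φ) p) (η p)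

/-- Screen second fundamental form coefficient `g_η = ⟨Φ_yy, η⟩`. -/
def gEtaP (Φ η : ℝ × ℝ → (Fin 4 → ℝ)) (p : ℝ × ℝ) : ℝ := mink (pdy (pdy Φ) p) (η p)

/-- Coefficient `A = f_η G − g_η F` of the equation of η-principal curvature lines. -/
def AcoefP (Φ η : ℝ × ℝ → (Fin 4 → ℝ)) (p : ℝ × ℝ) : ℝ :=
  fEtaP Φ η p * GcoefP Φ p - gEtaP Φ η p * FcoefP Φ p

/-- Coefficient `B = e_η G − g_η E` of the equation of η-principal curvature lines. -/
def BcoefP (Φ η : ℝ × ℝ → (Fin 4 → ℝ)) (p : ℝ × ℝ) : ℝ :=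
  eEtaP Φ η p * GcoefP Φ p - gEtaP Φ η p * EcoefP Φ p

/-- Coefficient `C = e_η F − f_η E` of the equation of η-principal curvature lines. -/
def CcoefP (Φ η : ℝ × ℝ → (Fin 4 → ℝ)) (p : ℝ × ℝ) : ℝ :=
  eEtaP Φ η p * FcoefP Φ p - fEtaP Φ η p * EcoefP Φ p

/-- The null vector field `ξ(x,y) = (1, x, 0, √(1 − x²))` on the cylinder `Λ² × ℝ`. -/
def xiCyl (p : ℝ × ℝ) : Fin 4 → ℝ := ![1, p.1, 0, Real.sqrt (1 - p.1 ^ 2)]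

/-- The parametrization `Φ(x,y) = (1, x, y, √(1 − x²)) + g(x,y)·(1, x, 0, √(1 − x²))`
of a surface in the cylinder `Λ² × ℝ ⊂ ℝ⁴₁`. -/
def PhiCyl (g : ℝ × ℝ → ℝ) (p : ℝ × ℝ) : Fin 4 → ℝ :=
  ![1, p.1, p.2, Real.sqrt (1 - p.1 ^ 2)] + g p • xiCyl p

namespace Tk

variable {f h : ℝ × ℝ → ℝ} {p : ℝ × ℝ}

lemma pdx_const (c : ℝ) (p : ℝ × ℝ) : pdx (fun _ => c) p = 0 := by
  simp [pdx]

lemma pdy_const (c : ℝ) (p : ℝ × ℝ) : pdy (fun _ => c) p = 0 := by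
  simp [pdy]

lemma pdx_add (hf : DifferentiableAt ℝ f p) (hh : DifferentiableAt ℝ h p) :
    pdx (fun q => f q + h q) p = pdx f p + pdx h p := by
  simp [pdx, fderiv_fun_add hf hh]

lemma pdy_add (hf : DifferentiableAt ℝ f p) (hh : DifferentiableAt ℝ h p) :
    pdy (fun q => f q + h q) p = pdy f p + pdy h p := by
  simp [pdy, fderiv_fun_add hf hh]

lemma pdx_mul (hf : DifferentiableAt ℝ f p) (hh : DifferentiableAt ℝ h p) :
    pdx (fun q => f q * h q) p = pdx f p * h p + f p * pdx h p := by
  simp [pdx, fderiv_fun_mul hf hh]; ring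

lemma pdy_mul (hf : DifferentiableAt ℝ f p) (hh : DifferentiableAt ℝ h p) :
    pdy (fun q => f q * h q) p = pdy f p * h p + f p * pdy h p := by
  simp [pdy, fderiv_fun_mul hf hh]; ring

lemma pdx_fst : pdx (fun q : ℝ × ℝ => q.1) p = 1 := by
  simp [pdx, fderiv_fst]

lemma pdy_fst : pdy (fun q : ℝ × ℝ => q.1) p = 0 := by
  simp [pdy, fderiv_fst]

lemma pdx_snd : pdx (fun q : ℝ × ℝ => q.2) p = 0 := by
  simp [pdx, fderiv_snd]

lemma pdy_snd : pdy (fun q : ℝ × ℝ => q.2) p = 1 := by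
  simp [pdy, fderiv_snd]

lemma pdx_comp_fst {u : ℝ → ℝ} {d : ℝ} (hu : HasDerivAt u d p.1) :
    pdx (fun q : ℝ × ℝ => u q.1) p = d := by
  have : HasFDerivAt (fun q : ℝ × ℝ => u q.1)
      ((d : ℝ) • (ContinuousLinearMap.fst ℝ ℝ ℝ)) p :=
    hu.comp_hasFDerivAt p hasFDerivAt_fst
  simp [pdx, this.fderiv]

lemma pdy_comp_fst {u : ℝ → ℝ} {d : ℝ} (hu : HasDerivAt u d p.1) :
    pdy (fun q : ℝ × ℝ => u q.1) p = 0 := by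
  have : HasFDerivAt (fun q : ℝ × ℝ => u q.1)
      ((d : ℝ) • (ContinuousLinearMap.fst ℝ ℝ ℝ)) p :=
    hu.comp_hasFDerivAt p hasFDerivAt_fst
  simp [pdy, this.fderiv]

lemma pdx_congr {E : Type*} [NormedAddCommGroup E] [NormedSpace ℝ E]
    {f h : ℝ × ℝ → E} (hfh : f =ᶠ[nhds p] h) : pdx f p = pdx h p := by
  simp [pdx, hfh.fderiv_eq]

lemma pdy_congr {E : Type*} [NormedAddCommGroup E] [NormedSpace ℝ E]
    {f h : ℝ × ℝ → E} (hfh : f =ᶠ[nhds p] h) : pdy f p = pdy h p := by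
  simp [pdy, hfh.fderiv_eq]

lemma pdx_apply {f : ℝ × ℝ → Fin 4 → ℝ} (hf : DifferentiableAt ℝ f p) (i : Fin 4) :
    pdx f p i = pdx (fun q => f q i) p := by
  have h := ((ContinuousLinearMap.proj (R := ℝ) (φ := fun _ : Fin 4 => ℝ) i).hasFDerivAt.comp
      p hf.hasFDerivAt).fderiv
  simp only [pdx]
  rw [show (fun q => f q i) = (ContinuousLinearMap.proj (R := ℝ) (φ := fun _ : Fin 4 => ℝ) i) ∘ f from rfl, h]
  rfl

lemma pdy_apply {f : ℝ × ℝ → Fin 4 → ℝ} (hf : DifferentiableAt ℝ f p) (i : Fin 4) :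
    pdy f p i = pdy (fun q => f q i) p := by
  have h := ((ContinuousLinearMap.proj (R := ℝ) (φ := fun _ : Fin 4 => ℝ) i).hasFDerivAt.comp
      p hf.hasFDerivAt).fderiv
  simp only [pdy]
  rw [show (fun q => f q i) = (ContinuousLinearMap.proj (R := ℝ) (φ := fun _ : Fin 4 => ℝ) i) ∘ f from rfl, h]
  rfl

end Tk
namespace Tk

variable {p : ℝ × ℝ}

lemma diff_comp_fst {u : ℝ → ℝ} {d : ℝ} (hu : HasDerivAt u d p.1) :
    DifferentiableAt ℝ (fun q : ℝ × ℝ => u q.1) p :=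
  (hu.comp_hasFDerivAt p hasFDerivAt_fst).differentiableAt

lemma diff_apply {f : ℝ × ℝ → Fin 4 → ℝ} (hf : DifferentiableAt ℝ f p) (i : Fin 4) :
    DifferentiableAt ℝ (fun q => f q i) p :=
  ((ContinuousLinearMap.proj (R := ℝ) (φ := fun _ : Fin 4 => ℝ) i).hasFDerivAt.comp
      p hf.hasFDerivAt).differentiableAt

lemma diff_vec4 {f0 f1 f2 f3 : ℝ × ℝ → ℝ} (h0 : DifferentiableAt ℝ f0 p)
    (h1 : DifferentiableAt ℝ f1 p) (h2 : DifferentiableAt ℝ f2 p)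
    (h3 : DifferentiableAt ℝ f3 p) :
    DifferentiableAt ℝ (fun q => ![f0 q, f1 q, f2 q, f3 q]) p := by
  rw [differentiableAt_pi]
  intro i
  fin_cases i <;> simpa

lemma pdx_vec4 {f0 f1 f2 f3 : ℝ × ℝ → ℝ} (h0 : DifferentiableAt ℝ f0 p)
    (h1 : DifferentiableAt ℝ f1 p) (h2 : DifferentiableAt ℝ f2 p)
    (h3 : DifferentiableAt ℝ f3 p) :
    pdx (fun q => ![f0 q, f1 q, f2 q, f3 q]) p = ![pdx f0 p, pdx f1 p, pdx f2 p, pdx f3 p] := by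
  funext i
  rw [pdx_apply (diff_vec4 h0 h1 h2 h3) i]
  fin_cases i <;> simp

lemma pdy_vec4 {f0 f1 f2 f3 : ℝ × ℝ → ℝ} (h0 : DifferentiableAt ℝ f0 p)
    (h1 : DifferentiableAt ℝ f1 p) (h2 : DifferentiableAt ℝ f2 p)
    (h3 : DifferentiableAt ℝ f3 p) :
    pdy (fun q => ![f0 q, f1 q, f2 q, f3 q]) p = ![pdy f0 p, pdy f1 p, pdy f2 p, pdy f3 p] := by
  funext i
  rw [pdy_apply (diff_vec4 h0 h1 h2 h3) i]
  fin_cases i <;> simp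

lemma diff_mink {A B : ℝ × ℝ → Fin 4 → ℝ} (hA : DifferentiableAt ℝ A p)
    (hB : DifferentiableAt ℝ B p) :
    DifferentiableAt ℝ (fun q => mink (A q) (B q)) p := by
  simp only [mink]
  exact ((((diff_apply hA 0).mul (diff_apply hB 0)).neg.add
    ((diff_apply hA 1).mul (diff_apply hB 1))).add
    ((diff_apply hA 2).mul (diff_apply hB 2))).add
    ((diff_apply hA 3).mul (diff_apply hB 3))

lemma pdx_neg {f : ℝ × ℝ → ℝ} : pdx (fun q => -f q) p = -pdx f p := by
  simp [pdx, fderiv_neg]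

lemma pdy_neg {f : ℝ × ℝ → ℝ} : pdy (fun q => -f q) p = -pdy f p := by
  simp [pdy, fderiv_neg]

lemma pdx_mink {A B : ℝ × ℝ → Fin 4 → ℝ} (hA : DifferentiableAt ℝ A p)
    (hB : DifferentiableAt ℝ B p) :
    pdx (fun q => mink (A q) (B q)) p = mink (pdx A p) (B p) + mink (A p) (pdx B p) := by
  simp only [mink]
  rw [pdx_add, pdx_add, pdx_add, pdx_neg, pdx_mul (diff_apply hA 0) (diff_apply hB 0),
    pdx_mul (diff_apply hA 1) (diff_apply hB 1), pdx_mul (diff_apply hA 2) (diff_apply hB 2),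
    pdx_mul (diff_apply hA 3) (diff_apply hB 3),
    ← pdx_apply hA 0, ← pdx_apply hB 0, ← pdx_apply hA 1, ← pdx_apply hB 1,
    ← pdx_apply hA 2, ← pdx_apply hB 2, ← pdx_apply hA 3, ← pdx_apply hB 3]
  · ring
  all_goals first
    | exact ((diff_apply hA 0).mul (diff_apply hB 0)).neg
    | exact (diff_apply hA 1).mul (diff_apply hB 1)
    | exact (diff_apply hA 2).mul (diff_apply hB 2)
    | exact (diff_apply hA 3).mul (diff_apply hB 3)
    | exact (((diff_apply hA 0).mul (diff_apply hB 0)).neg.add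
        ((diff_apply hA 1).mul (diff_apply hB 1)))
    | exact (((diff_apply hA 0).mul (diff_apply hB 0)).neg.add
        ((diff_apply hA 1).mul (diff_apply hB 1))).add ((diff_apply hA 2).mul (diff_apply hB 2))

lemma pdy_mink {A B : ℝ × ℝ → Fin 4 → ℝ} (hA : DifferentiableAt ℝ A p)
    (hB : DifferentiableAt ℝ B p) :
    pdy (fun q => mink (A q) (B q)) p = mink (pdy A p) (B p) + mink (A p) (pdy B p) := by
  simp only [mink]
  rw [pdy_add, pdy_add, pdy_add, pdy_neg, pdy_mul (diff_apply hA 0) (diff_apply hB 0),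
    pdy_mul (diff_apply hA 1) (diff_apply hB 1), pdy_mul (diff_apply hA 2) (diff_apply hB 2),
    pdy_mul (diff_apply hA 3) (diff_apply hB 3),
    ← pdy_apply hA 0, ← pdy_apply hB 0, ← pdy_apply hA 1, ← pdy_apply hB 1,
    ← pdy_apply hA 2, ← pdy_apply hB 2, ← pdy_apply hA 3, ← pdy_apply hB 3]
  · ring
  all_goals first
    | exact ((diff_apply hA 0).mul (diff_apply hB 0)).neg
    | exact (diff_apply hA 1).mul (diff_apply hB 1)
    | exact (diff_apply hA 2).mul (diff_apply hB 2)
    | exact (diff_apply hA 3).mul (diff_apply hB 3)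
    | exact (((diff_apply hA 0).mul (diff_apply hB 0)).neg.add
        ((diff_apply hA 1).mul (diff_apply hB 1)))
    | exact (((diff_apply hA 0).mul (diff_apply hB 0)).neg.add
        ((diff_apply hA 1).mul (diff_apply hB 1))).add ((diff_apply hA 2).mul (diff_apply hB 2))

-- smoothness of pdx/pdy
lemma contDiffAt_pdx {f : ℝ × ℝ → ℝ} (hf : ContDiffAt ℝ (⊤ : ℕ∞) f p) :
    ContDiffAt ℝ (⊤ : ℕ∞) (pdx f) p := by
  have h1 : ContDiffAt ℝ (⊤ : ℕ∞) (fderiv ℝ f) p := hf.fderiv_right (by simp)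
  exact (ContinuousLinearMap.apply ℝ ℝ ((1 : ℝ), (0 : ℝ))).contDiff.contDiffAt.comp p h1

lemma contDiffAt_pdy {f : ℝ × ℝ → ℝ} (hf : ContDiffAt ℝ (⊤ : ℕ∞) f p) :
    ContDiffAt ℝ (⊤ : ℕ∞) (pdy f) p := by
  have h1 : ContDiffAt ℝ (⊤ : ℕ∞) (fderiv ℝ f) p := hf.fderiv_right (by simp)
  exact (ContinuousLinearMap.apply ℝ ℝ ((0 : ℝ), (1 : ℝ))).contDiff.contDiffAt.comp p h1

end Tk
namespace Tk

variable {p : ℝ × ℝ}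

lemma pdx_pdy_symm {f : ℝ × ℝ → ℝ} {s : Set (ℝ × ℝ)} (hs : IsOpen s) (hp : p ∈ s)
    (hf : ∀ q ∈ s, ContDiffAt ℝ (⊤ : ℕ∞) f q) : pdx (pdy f) p = pdy (pdx f) p := by
  have hdiff : ∀ᶠ y in nhds p, HasFDerivAt f (fderiv ℝ f y) y := by
    filter_upwards [hs.mem_nhds hp] with q hq
    exact ((hf q hq).differentiableAt (by simp)).hasFDerivAt
  have h2 : DifferentiableAt ℝ (fderiv ℝ f) p :=
    ((hf p hp).fderiv_right (m := 1) (by exact WithTop.coe_le_coe.mpr le_top)).differentiableAt one_ne_zero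
  have hsymm := second_derivative_symmetric_of_eventually hdiff h2.hasFDerivAt
  have hc1 : HasFDerivAt (pdy f)
      ((ContinuousLinearMap.apply ℝ ℝ ((0:ℝ),(1:ℝ))).comp (fderiv ℝ (fderiv ℝ f) p)) p :=
    (ContinuousLinearMap.apply ℝ ℝ ((0:ℝ),(1:ℝ))).hasFDerivAt.comp p h2.hasFDerivAt
  have hc2 : HasFDerivAt (pdx f)
      ((ContinuousLinearMap.apply ℝ ℝ ((1:ℝ),(0:ℝ))).comp (fderiv ℝ (fderiv ℝ f) p)) p :=
    (ContinuousLinearMap.apply ℝ ℝ ((1:ℝ),(0:ℝ))).hasFDerivAt.comp p h2.hasFDerivAt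
  have e1 : pdx (pdy f) p = fderiv ℝ (fderiv ℝ f) p (1, 0) (0, 1) := by
    rw [pdx, hc1.fderiv]; rfl
  have e2 : pdy (pdx f) p = fderiv ℝ (fderiv ℝ f) p (0, 1) (1, 0) := by
    rw [pdy, hc2.fderiv]; rfl
  rw [e1, e2, hsymm (1,0) (0,1)]

def uf (x : ℝ) : ℝ := Real.sqrt (1 - x ^ 2)
def uf1 (x : ℝ) : ℝ := -x / Real.sqrt (1 - x ^ 2)
def uf2 (x : ℝ) : ℝ := -1 / (Real.sqrt (1 - x ^ 2)) ^ 3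

lemma uf_pos {x : ℝ} (hx : x ∈ Set.Ioo (-1 : ℝ) 1) : 0 < Real.sqrt (1 - x ^ 2) := by
  apply Real.sqrt_pos.2
  nlinarith [hx.1, hx.2]

lemma uf_zero : uf 0 = 1 := by simp [uf]
lemma uf1_zero : uf1 0 = 0 := by simp [uf1]
lemma uf2_zero : uf2 0 = -1 := by simp [uf2]

lemma hasDerivAt_sq (x : ℝ) : HasDerivAt (fun t : ℝ => 1 - t ^ 2) (-(2 * x)) x := by
  simpa using ((hasDerivAt_pow 2 x).const_sub 1)

lemma hasDerivAt_uf {x : ℝ} (hx : x ∈ Set.Ioo (-1 : ℝ) 1) : HasDerivAt uf (uf1 x) x := by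
  have hs := uf_pos hx
  have h1 : (1 : ℝ) - x ^ 2 ≠ 0 := by nlinarith [hx.1, hx.2]
  have := (Real.hasDerivAt_sqrt h1).comp x (hasDerivAt_sq x)
  refine this.congr_deriv (Eq.symm ?_)
  rw [uf1]
  field_simp

lemma hasDerivAt_uf1 {x : ℝ} (hx : x ∈ Set.Ioo (-1 : ℝ) 1) : HasDerivAt uf1 (uf2 x) x := by
  have hs := uf_pos hx
  have hsq : Real.sqrt (1 - x ^ 2) ^ 2 = 1 - x ^ 2 := Real.sq_sqrt (by nlinarith [hx.1, hx.2])
  have h := ((hasDerivAt_id x).neg.div (hasDerivAt_uf hx) hs.ne')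
  refine h.congr_deriv (Eq.symm ?_)
  rw [uf2, uf1, uf]
  simp only [Pi.neg_apply, id]
  field_simp
  linear_combination hsq

lemma hasDerivAt_uf2_zero : HasDerivAt uf2 0 0 := by
  have hx : (0 : ℝ) ∈ Set.Ioo (-1 : ℝ) 1 := by constructor <;> norm_num
  have hcube : HasDerivAt (fun t : ℝ => (uf t) ^ 3) (3 * uf 0 ^ 2 * uf1 0) 0 := by
    simpa [Function.comp_def] using ((hasDerivAt_pow 3 (uf 0)).comp 0 (hasDerivAt_uf hx))
  have h := ((hasDerivAt_const (0:ℝ) (-1 : ℝ)).div hcube (by simp [uf]))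
  refine h.congr_deriv ?_
  norm_num [uf1_zero, uf_zero]

end Tk
namespace Tk
variable {p : ℝ × ℝ} {f h : ℝ × ℝ → ℝ}
lemma pdx_sub (hf : DifferentiableAt ℝ f p) (hh : DifferentiableAt ℝ h p) :
    pdx (fun q => f q - h q) p = pdx f p - pdx h p := by
  simp [pdx, fderiv_fun_sub hf hh]
lemma pdy_sub (hf : DifferentiableAt ℝ f p) (hh : DifferentiableAt ℝ h p) :
    pdy (fun q => f q - h q) p = pdy f p - pdy h p := by
  simp [pdy, fderiv_fun_sub hf hh]
end Tk
namespace Tk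
variable {p : ℝ × ℝ}
lemma diff_fst : DifferentiableAt ℝ (fun q : ℝ × ℝ => q.1) p := differentiableAt_fst
lemma diff_snd : DifferentiableAt ℝ (fun q : ℝ × ℝ => q.2) p := differentiableAt_snd
end Tk

open Tk in
def Pv (g : ℝ × ℝ → ℝ) : ℝ × ℝ → Fin 4 → ℝ := fun q =>
  ![1 + g q, q.1 + g q * q.1, q.2, uf q.1 + g q * uf q.1]

open Tk in
def PXv (g : ℝ × ℝ → ℝ) : ℝ × ℝ → Fin 4 → ℝ := fun q =>
  ![pdx g q, 1 + (pdx g q * q.1 + g q), 0,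
    uf1 q.1 + (pdx g q * uf q.1 + g q * uf1 q.1)]

open Tk in
def PYv (g : ℝ × ℝ → ℝ) : ℝ × ℝ → Fin 4 → ℝ := fun q =>
  ![pdy g q, pdy g q * q.1, 1, pdy g q * uf q.1]

open Tk in
def PXXv (g : ℝ × ℝ → ℝ) : ℝ × ℝ → Fin 4 → ℝ := fun q =>
  ![pdx (pdx g) q, pdx (pdx g) q * q.1 + 2 * pdx g q, 0,
    uf2 q.1 + (pdx (pdx g) q * uf q.1 + 2 * pdx g q * uf1 q.1 + g q * uf2 q.1)]

open Tk in
def PXYv (g : ℝ × ℝ → ℝ) : ℝ × ℝ → Fin 4 → ℝ := fun q =>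
  ![pdx (pdy g) q, pdx (pdy g) q * q.1 + pdy g q, 0,
    pdx (pdy g) q * uf q.1 + pdy g q * uf1 q.1]

open Tk in
def PYYv (g : ℝ × ℝ → ℝ) : ℝ × ℝ → Fin 4 → ℝ := fun q =>
  ![pdy (pdy g) q, pdy (pdy g) q * q.1, 0, pdy (pdy g) q * uf q.1]

set_option maxHeartbeats 4000000 in
theorem stmt16 (g : ℝ × ℝ → ℝ)
    (hg : ContDiffOn ℝ (⊤ : ℕ∞) g (Set.Ioo (-1 : ℝ) 1 ×ˢ (Set.univ : Set ℝ)))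
    (k a b c : ℝ)
    (hg0 : g (0, 0) = 0) (hgx : pdx g (0, 0) = 0) (hgy : pdy g (0, 0) = 0)
    (hgxx : pdx (pdx g) (0, 0) = k + 1 / 2) (hgyy : pdy (pdy g) (0, 0) = k)
    (hgxy : pdx (pdy g) (0, 0) = 0)
    (hgxxy : pdx (pdx (pdy g)) (0, 0) = 0)
    (hgxxx : pdx (pdx (pdx g)) (0, 0) = a)
    (hgxyy : pdx (pdy (pdy g)) (0, 0) = b)
    (hgyyy : pdy (pdy (pdy g)) (0, 0) = c)
    (U : Set (ℝ × ℝ)) (hU : U ∈ nhds ((0, 0) : ℝ × ℝ))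
    (η : ℝ × ℝ → (Fin 4 → ℝ)) (hη : ContDiffOn ℝ 1 η U)
    (h1 : ∀ p ∈ U, mink (η p) (xiCyl p) = 1)
    (h2 : ∀ p ∈ U, mink (η p) (η p) = 0)
    (h3 : ∀ p ∈ U, mink (η p) (pdx (PhiCyl g) p) = 0)
    (h4 : ∀ p ∈ U, mink (η p) (pdy (PhiCyl g) p) = 0) :
    AcoefP (PhiCyl g) η (0, 0) = 0 ∧
    BcoefP (PhiCyl g) η (0, 0) = 0 ∧
    CcoefP (PhiCyl g) η (0, 0) = 0 ∧
    pdx (AcoefP (PhiCyl g) η) (0, 0) = 0 ∧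
    pdy (AcoefP (PhiCyl g) η) (0, 0) = b ∧
    pdx (BcoefP (PhiCyl g) η) (0, 0) = a - b ∧
    pdy (BcoefP (PhiCyl g) η) (0, 0) = -c ∧
    pdx (CcoefP (PhiCyl g) η) (0, 0) = 0 ∧
    pdy (CcoefP (PhiCyl g) η) (0, 0) = -b := by
  have hOo : IsOpen (Set.Ioo (-1 : ℝ) 1 ×ˢ (Set.univ : Set ℝ)) := isOpen_Ioo.prod isOpen_univ
  set Ω : Set (ℝ × ℝ) := Set.Ioo (-1 : ℝ) 1 ×ˢ (Set.univ : Set ℝ) with hΩdef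
  have h0Ω : ((0 : ℝ), (0 : ℝ)) ∈ Ω := ⟨by constructor <;> norm_num, trivial⟩
  have hsm : ∀ q ∈ Ω, ContDiffAt ℝ (⊤ : ℕ∞) g q := fun q hq => hg.contDiffAt (hOo.mem_nhds hq)
  have h0U : ((0 : ℝ), (0 : ℝ)) ∈ U := mem_of_mem_nhds hU
  -- basic membership / sqrt facts at the origin
  have h0I : (((0 : ℝ), (0 : ℝ)) : ℝ × ℝ).1 ∈ Set.Ioo (-1 : ℝ) 1 := by norm_num
  have hu0 : HasDerivAt Tk.uf (Tk.uf1 (((0:ℝ),(0:ℝ)) : ℝ × ℝ).1) (((0:ℝ),(0:ℝ)) : ℝ × ℝ).1 :=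
    Tk.hasDerivAt_uf h0I
  have hu10 : HasDerivAt Tk.uf1 (Tk.uf2 (((0:ℝ),(0:ℝ)) : ℝ × ℝ).1) (((0:ℝ),(0:ℝ)) : ℝ × ℝ).1 :=
    Tk.hasDerivAt_uf1 h0I
  have hu20 : HasDerivAt Tk.uf2 0 (((0:ℝ),(0:ℝ)) : ℝ × ℝ).1 := Tk.hasDerivAt_uf2_zero
  have hdu0 : DifferentiableAt ℝ (fun q : ℝ × ℝ => Tk.uf q.1) ((0:ℝ),(0:ℝ)) := Tk.diff_comp_fst hu0
  have hdu10 : DifferentiableAt ℝ (fun q : ℝ × ℝ => Tk.uf1 q.1) ((0:ℝ),(0:ℝ)) := Tk.diff_comp_fst hu10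
  have hdu20 : DifferentiableAt ℝ (fun q : ℝ × ℝ => Tk.uf2 q.1) ((0:ℝ),(0:ℝ)) := Tk.diff_comp_fst hu20
  -- differentiability of g and its partials at points of Ω
  have hdgΩ : ∀ q ∈ Ω, DifferentiableAt ℝ g q := fun q hq => (hsm q hq).differentiableAt (by simp)
  have hsmx : ∀ q ∈ Ω, ContDiffAt ℝ (⊤ : ℕ∞) (pdx g) q := fun q hq => Tk.contDiffAt_pdx (hsm q hq)
  have hsmy : ∀ q ∈ Ω, ContDiffAt ℝ (⊤ : ℕ∞) (pdy g) q := fun q hq => Tk.contDiffAt_pdy (hsm q hq)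
  have hdgxΩ : ∀ q ∈ Ω, DifferentiableAt ℝ (pdx g) q := fun q hq => (hsmx q hq).differentiableAt (by simp)
  have hdgyΩ : ∀ q ∈ Ω, DifferentiableAt ℝ (pdy g) q := fun q hq => (hsmy q hq).differentiableAt (by simp)
  have hdgxxΩ : ∀ q ∈ Ω, DifferentiableAt ℝ (pdx (pdx g)) q :=
    fun q hq => (Tk.contDiffAt_pdx (hsmx q hq)).differentiableAt (by simp)
  have hdgxyΩ : ∀ q ∈ Ω, DifferentiableAt ℝ (pdx (pdy g)) q :=
    fun q hq => (Tk.contDiffAt_pdx (hsmy q hq)).differentiableAt (by simp)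
  have hdgyyΩ : ∀ q ∈ Ω, DifferentiableAt ℝ (pdy (pdy g)) q :=
    fun q hq => (Tk.contDiffAt_pdy (hsmy q hq)).differentiableAt (by simp)
  have hdg0 := hdgΩ _ h0Ω
  have hdgx0 := hdgxΩ _ h0Ω
  have hdgy0 := hdgyΩ _ h0Ω
  have hdgxx0 := hdgxxΩ _ h0Ω
  have hdgxy0 := hdgxyΩ _ h0Ω
  have hdgyy0 := hdgyyΩ _ h0Ω
  -- symmetry of second derivatives
  have s1 : pdy (pdx g) ((0:ℝ),(0:ℝ)) = 0 := by
    rw [← Tk.pdx_pdy_symm hOo h0Ω hsm, hgxy]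
  have s2 : pdy (pdx (pdx g)) ((0:ℝ),(0:ℝ)) = 0 := by
    rw [← Tk.pdx_pdy_symm hOo h0Ω hsmx]
    have hev : pdy (pdx g) =ᶠ[nhds (((0:ℝ),(0:ℝ)) : ℝ × ℝ)] pdx (pdy g) := by
      filter_upwards [hOo.mem_nhds h0Ω] with r hr using (Tk.pdx_pdy_symm hOo hr hsm).symm
    rw [Tk.pdx_congr hev, hgxxy]
  have s3 : pdy (pdx (pdy g)) ((0:ℝ),(0:ℝ)) = b := by
    rw [← Tk.pdx_pdy_symm hOo h0Ω hsmy, hgxyy]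
  -- Φ as an explicit vector function
  have hΦ : PhiCyl g = Pv g := by
    funext q
    funext i
    fin_cases i <;> simp [PhiCyl, xiCyl, Pv, Tk.uf] <;> ring
  -- first derivatives of Φ on Ω
  have hPXcore : ∀ q ∈ Ω, pdx (Pv g) q = PXv g q := by
    intro q hq
    have hq1 : q.1 ∈ Set.Ioo (-1 : ℝ) 1 := hq.1
    have hdg := hdgΩ q hq
    have hu := Tk.hasDerivAt_uf hq1
    have hdu : DifferentiableAt ℝ (fun q : ℝ × ℝ => Tk.uf q.1) q := Tk.diff_comp_fst hu
    have c0 : pdx (fun q : ℝ × ℝ => 1 + g q) q = pdx g q := by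
      rw [Tk.pdx_add (differentiableAt_const 1) hdg, Tk.pdx_const]; ring
    have c1 : pdx (fun q : ℝ × ℝ => q.1 + g q * q.1) q = 1 + (pdx g q * q.1 + g q) := by
      rw [Tk.pdx_add Tk.diff_fst (hdg.fun_mul Tk.diff_fst),
        Tk.pdx_mul hdg Tk.diff_fst, Tk.pdx_fst]; ring
    have c3 : pdx (fun q : ℝ × ℝ => Tk.uf q.1 + g q * Tk.uf q.1) q
        = Tk.uf1 q.1 + (pdx g q * Tk.uf q.1 + g q * Tk.uf1 q.1) := by
      rw [Tk.pdx_add hdu (hdg.fun_mul hdu), Tk.pdx_mul hdg hdu, Tk.pdx_comp_fst hu]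
    rw [show Pv g = fun q : ℝ × ℝ =>
        ![1 + g q, q.1 + g q * q.1, q.2, Tk.uf q.1 + g q * Tk.uf q.1] from rfl,
      Tk.pdx_vec4 ((differentiableAt_const 1).fun_add hdg)
        (Tk.diff_fst.fun_add (hdg.fun_mul Tk.diff_fst)) Tk.diff_snd
        (hdu.fun_add (hdg.fun_mul hdu)),
      c0, c1, Tk.pdx_snd, c3]
    rfl
  have hPYcore : ∀ q ∈ Ω, pdy (Pv g) q = PYv g q := by
    intro q hq
    have hq1 : q.1 ∈ Set.Ioo (-1 : ℝ) 1 := hq.1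
    have hdg := hdgΩ q hq
    have hu := Tk.hasDerivAt_uf hq1
    have hdu : DifferentiableAt ℝ (fun q : ℝ × ℝ => Tk.uf q.1) q := Tk.diff_comp_fst hu
    have c0 : pdy (fun q : ℝ × ℝ => 1 + g q) q = pdy g q := by
      rw [Tk.pdy_add (differentiableAt_const 1) hdg, Tk.pdy_const]; ring
    have c1 : pdy (fun q : ℝ × ℝ => q.1 + g q * q.1) q = pdy g q * q.1 := by
      rw [Tk.pdy_add Tk.diff_fst (hdg.fun_mul Tk.diff_fst),
        Tk.pdy_mul hdg Tk.diff_fst, Tk.pdy_fst]; ring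
    have c3 : pdy (fun q : ℝ × ℝ => Tk.uf q.1 + g q * Tk.uf q.1) q = pdy g q * Tk.uf q.1 := by
      rw [Tk.pdy_add hdu (hdg.fun_mul hdu), Tk.pdy_mul hdg hdu, Tk.pdy_comp_fst hu]; ring
    rw [show Pv g = fun q : ℝ × ℝ =>
        ![1 + g q, q.1 + g q * q.1, q.2, Tk.uf q.1 + g q * Tk.uf q.1] from rfl,
      Tk.pdy_vec4 ((differentiableAt_const 1).fun_add hdg)
        (Tk.diff_fst.fun_add (hdg.fun_mul Tk.diff_fst)) Tk.diff_snd
        (hdu.fun_add (hdg.fun_mul hdu)),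
      c0, c1, Tk.pdy_snd, c3]
    rfl
  -- second derivatives on Ω
  have hPXXcore : ∀ q ∈ Ω, pdx (PXv g) q = PXXv g q := by
    intro q hq
    have hq1 : q.1 ∈ Set.Ioo (-1 : ℝ) 1 := hq.1
    have hdg := hdgΩ q hq
    have hdgx := hdgxΩ q hq
    have hu := Tk.hasDerivAt_uf hq1
    have hu1 := Tk.hasDerivAt_uf1 hq1
    have hdu : DifferentiableAt ℝ (fun q : ℝ × ℝ => Tk.uf q.1) q := Tk.diff_comp_fst hu
    have hdu1 : DifferentiableAt ℝ (fun q : ℝ × ℝ => Tk.uf1 q.1) q := Tk.diff_comp_fst hu1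
    have c1 : pdx (fun q : ℝ × ℝ => 1 + (pdx g q * q.1 + g q)) q
        = pdx (pdx g) q * q.1 + 2 * pdx g q := by
      rw [Tk.pdx_add (differentiableAt_const 1) ((hdgx.fun_mul Tk.diff_fst).fun_add hdg),
        Tk.pdx_add (hdgx.fun_mul Tk.diff_fst) hdg, Tk.pdx_mul hdgx Tk.diff_fst,
        Tk.pdx_fst, Tk.pdx_const]
      ring
    have c3 : pdx (fun q : ℝ × ℝ => Tk.uf1 q.1 + (pdx g q * Tk.uf q.1 + g q * Tk.uf1 q.1)) q
        = Tk.uf2 q.1 + (pdx (pdx g) q * Tk.uf q.1 + 2 * pdx g q * Tk.uf1 q.1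
          + g q * Tk.uf2 q.1) := by
      rw [Tk.pdx_add hdu1 ((hdgx.fun_mul hdu).fun_add (hdg.fun_mul hdu1)),
        Tk.pdx_add (hdgx.fun_mul hdu) (hdg.fun_mul hdu1), Tk.pdx_mul hdgx hdu,
        Tk.pdx_mul hdg hdu1, Tk.pdx_comp_fst hu, Tk.pdx_comp_fst hu1]
      ring
    rw [show PXv g = fun q : ℝ × ℝ => ![pdx g q, 1 + (pdx g q * q.1 + g q), 0,
        Tk.uf1 q.1 + (pdx g q * Tk.uf q.1 + g q * Tk.uf1 q.1)] from rfl,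
      Tk.pdx_vec4 hdgx ((differentiableAt_const 1).fun_add ((hdgx.fun_mul Tk.diff_fst).fun_add hdg))
        (differentiableAt_const 0) (hdu1.fun_add ((hdgx.fun_mul hdu).fun_add (hdg.fun_mul hdu1))),
      c1, c3, Tk.pdx_const]
    rfl
  have hPXYcore : ∀ q ∈ Ω, pdx (PYv g) q = PXYv g q := by
    intro q hq
    have hq1 : q.1 ∈ Set.Ioo (-1 : ℝ) 1 := hq.1
    have hdgy := hdgyΩ q hq
    have hu := Tk.hasDerivAt_uf hq1
    have hdu : DifferentiableAt ℝ (fun q : ℝ × ℝ => Tk.uf q.1) q := Tk.diff_comp_fst hu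
    have c1 : pdx (fun q : ℝ × ℝ => pdy g q * q.1) q = pdx (pdy g) q * q.1 + pdy g q := by
      rw [Tk.pdx_mul hdgy Tk.diff_fst, Tk.pdx_fst]; ring
    have c3 : pdx (fun q : ℝ × ℝ => pdy g q * Tk.uf q.1) q
        = pdx (pdy g) q * Tk.uf q.1 + pdy g q * Tk.uf1 q.1 := by
      rw [Tk.pdx_mul hdgy hdu, Tk.pdx_comp_fst hu]
    rw [show PYv g = fun q : ℝ × ℝ =>
        ![pdy g q, pdy g q * q.1, 1, pdy g q * Tk.uf q.1] from rfl,
      Tk.pdx_vec4 hdgy (hdgy.fun_mul Tk.diff_fst) (differentiableAt_const 1) (hdgy.fun_mul hdu),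
      c1, c3, Tk.pdx_const]
    rfl
  have hPYYcore : ∀ q ∈ Ω, pdy (PYv g) q = PYYv g q := by
    intro q hq
    have hq1 : q.1 ∈ Set.Ioo (-1 : ℝ) 1 := hq.1
    have hdgy := hdgyΩ q hq
    have hu := Tk.hasDerivAt_uf hq1
    have hdu : DifferentiableAt ℝ (fun q : ℝ × ℝ => Tk.uf q.1) q := Tk.diff_comp_fst hu
    have c1 : pdy (fun q : ℝ × ℝ => pdy g q * q.1) q = pdy (pdy g) q * q.1 := by
      rw [Tk.pdy_mul hdgy Tk.diff_fst, Tk.pdy_fst]; ring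
    have c3 : pdy (fun q : ℝ × ℝ => pdy g q * Tk.uf q.1) q = pdy (pdy g) q * Tk.uf q.1 := by
      rw [Tk.pdy_mul hdgy hdu, Tk.pdy_comp_fst hu]; ring
    rw [show PYv g = fun q : ℝ × ℝ =>
        ![pdy g q, pdy g q * q.1, 1, pdy g q * Tk.uf q.1] from rfl,
      Tk.pdy_vec4 hdgy (hdgy.fun_mul Tk.diff_fst) (differentiableAt_const 1) (hdgy.fun_mul hdu),
      c1, c3, Tk.pdy_const]
    rfl
  -- transfers to PhiCyl
  have hPX : ∀ q ∈ Ω, pdx (PhiCyl g) q = PXv g q := by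
    intro q hq; rw [hΦ]; exact hPXcore q hq
  have hPY : ∀ q ∈ Ω, pdy (PhiCyl g) q = PYv g q := by
    intro q hq; rw [hΦ]; exact hPYcore q hq
  have hPXX : ∀ q ∈ Ω, pdx (pdx (PhiCyl g)) q = PXXv g q := by
    intro q hq
    have hev : pdx (PhiCyl g) =ᶠ[nhds q] PXv g := by
      filter_upwards [hOo.mem_nhds hq] with r hr using hPX r hr
    rw [Tk.pdx_congr hev]; exact hPXXcore q hq
  have hPXY : ∀ q ∈ Ω, pdx (pdy (PhiCyl g)) q = PXYv g q := by
    intro q hq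
    have hev : pdy (PhiCyl g) =ᶠ[nhds q] PYv g := by
      filter_upwards [hOo.mem_nhds hq] with r hr using hPY r hr
    rw [Tk.pdx_congr hev]; exact hPXYcore q hq
  have hPYY : ∀ q ∈ Ω, pdy (pdy (PhiCyl g)) q = PYYv g q := by
    intro q hq
    have hev : pdy (PhiCyl g) =ᶠ[nhds q] PYv g := by
      filter_upwards [hOo.mem_nhds hq] with r hr using hPY r hr
    rw [Tk.pdy_congr hev]; exact hPYYcore q hq
  -- primed value hypotheses (with `0 : ℝ × ℝ` instead of `(0,0)`)
  have hg0' : g 0 = 0 := hg0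
  have hgx' : pdx g 0 = 0 := hgx
  have hgy' : pdy g 0 = 0 := hgy
  have hgxx' : pdx (pdx g) 0 = k + 1 / 2 := hgxx
  have hgyy' : pdy (pdy g) 0 = k := hgyy
  have hgxy' : pdx (pdy g) 0 = 0 := hgxy
  have hgxxy' : pdx (pdx (pdy g)) 0 = 0 := hgxxy
  have hgxxx' : pdx (pdx (pdx g)) 0 = a := hgxxx
  have hgxyy' : pdx (pdy (pdy g)) 0 = b := hgxyy
  have hgyyy' : pdy (pdy (pdy g)) 0 = c := hgyyy
  have s1' : pdy (pdx g) 0 = 0 := s1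
  have s2' : pdy (pdx (pdx g)) 0 = 0 := s2
  have s3' : pdy (pdx (pdy g)) 0 = b := s3
  -- values of the derivative vectors at the origin
  have vPX : PXv g ((0,0) : ℝ × ℝ) = ![0, 1, 0, 0] := by
    funext i
    fin_cases i <;>
      norm_num [PXv, hgx, hgx', hg0, hg0', Tk.uf_zero, Tk.uf1_zero]
  have vPY : PYv g ((0,0) : ℝ × ℝ) = ![0, 0, 1, 0] := by
    funext i
    fin_cases i <;>
      norm_num [PYv, hgy, hgy', hg0, hg0', Tk.uf_zero, Tk.uf1_zero]
  have vPXX : PXXv g ((0,0) : ℝ × ℝ) = ![k + 1/2, 0, 0, k - 1/2] := by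
    funext i
    fin_cases i <;>
      norm_num [PXXv, hgxx, hgxx', hgx, hgx', hg0, hg0', Tk.uf_zero, Tk.uf1_zero,
        Tk.uf2_zero] <;> try ring
  have vPXY : PXYv g ((0,0) : ℝ × ℝ) = ![0, 0, 0, 0] := by
    funext i
    fin_cases i <;>
      norm_num [PXYv, hgxy, hgxy', hgy, hgy', hg0, hg0', Tk.uf_zero, Tk.uf1_zero]
  have vPYY : PYYv g ((0,0) : ℝ × ℝ) = ![k, 0, 0, k] := by
    funext i
    fin_cases i <;>
      norm_num [PYYv, hgyy, hgyy', hgy, hgy', hg0, hg0', Tk.uf_zero, Tk.uf1_zero]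
  -- differentiability of the derivative vectors at the origin
  have d2gx0 : DifferentiableAt ℝ (fun q : ℝ × ℝ => 2 * pdx g q) ((0,0) : ℝ × ℝ) :=
    (differentiableAt_const 2).fun_mul hdgx0
  have dPX0 : DifferentiableAt ℝ (PXv g) ((0,0) : ℝ × ℝ) := by
    rw [show PXv g = fun q : ℝ × ℝ => ![pdx g q, 1 + (pdx g q * q.1 + g q), 0,
        Tk.uf1 q.1 + (pdx g q * Tk.uf q.1 + g q * Tk.uf1 q.1)] from rfl]
    exact Tk.diff_vec4 hdgx0 ((differentiableAt_const 1).fun_add ((hdgx0.fun_mul Tk.diff_fst).fun_add hdg0))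
      (differentiableAt_const 0) (hdu10.fun_add ((hdgx0.fun_mul hdu0).fun_add (hdg0.fun_mul hdu10)))
  have dPY0 : DifferentiableAt ℝ (PYv g) ((0,0) : ℝ × ℝ) := by
    rw [show PYv g = fun q : ℝ × ℝ => ![pdy g q, pdy g q * q.1, 1, pdy g q * Tk.uf q.1] from rfl]
    exact Tk.diff_vec4 hdgy0 (hdgy0.fun_mul Tk.diff_fst) (differentiableAt_const 1) (hdgy0.fun_mul hdu0)
  have dPXX0 : DifferentiableAt ℝ (PXXv g) ((0,0) : ℝ × ℝ) := by
    rw [show PXXv g = fun q : ℝ × ℝ => ![pdx (pdx g) q, pdx (pdx g) q * q.1 + 2 * pdx g q, 0,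
        Tk.uf2 q.1 + (pdx (pdx g) q * Tk.uf q.1 + 2 * pdx g q * Tk.uf1 q.1 + g q * Tk.uf2 q.1)]
        from rfl]
    exact Tk.diff_vec4 hdgxx0 ((hdgxx0.fun_mul Tk.diff_fst).fun_add d2gx0) (differentiableAt_const 0)
      (hdu20.fun_add (((hdgxx0.fun_mul hdu0).fun_add (d2gx0.fun_mul hdu10)).fun_add (hdg0.fun_mul hdu20)))
  have dPXY0 : DifferentiableAt ℝ (PXYv g) ((0,0) : ℝ × ℝ) := by
    rw [show PXYv g = fun q : ℝ × ℝ => ![pdx (pdy g) q, pdx (pdy g) q * q.1 + pdy g q, 0,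
        pdx (pdy g) q * Tk.uf q.1 + pdy g q * Tk.uf1 q.1] from rfl]
    exact Tk.diff_vec4 hdgxy0 ((hdgxy0.fun_mul Tk.diff_fst).fun_add hdgy0) (differentiableAt_const 0)
      ((hdgxy0.fun_mul hdu0).fun_add (hdgy0.fun_mul hdu10))
  have dPYY0 : DifferentiableAt ℝ (PYYv g) ((0,0) : ℝ × ℝ) := by
    rw [show PYYv g = fun q : ℝ × ℝ => ![pdy (pdy g) q, pdy (pdy g) q * q.1, 0,
        pdy (pdy g) q * Tk.uf q.1] from rfl]
    exact Tk.diff_vec4 hdgyy0 (hdgyy0.fun_mul Tk.diff_fst) (differentiableAt_const 0)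
      (hdgyy0.fun_mul hdu0)
  -- third-order derivative values at the origin
  have dyPX0 : pdy (PXv g) ((0,0) : ℝ × ℝ) = ![0, 0, 0, 0] := by
    have c1 : pdy (fun q : ℝ × ℝ => 1 + (pdx g q * q.1 + g q)) ((0,0) : ℝ × ℝ) = 0 := by
      rw [Tk.pdy_add (differentiableAt_const 1) ((hdgx0.fun_mul Tk.diff_fst).fun_add hdg0),
        Tk.pdy_add (hdgx0.fun_mul Tk.diff_fst) hdg0, Tk.pdy_mul hdgx0 Tk.diff_fst,
        Tk.pdy_fst, Tk.pdy_const]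
      norm_num [s1, s1', hgy, hgy', hgx, hgx']
    have c3 : pdy (fun q : ℝ × ℝ =>
        Tk.uf1 q.1 + (pdx g q * Tk.uf q.1 + g q * Tk.uf1 q.1)) ((0,0) : ℝ × ℝ) = 0 := by
      rw [Tk.pdy_add hdu10 ((hdgx0.fun_mul hdu0).fun_add (hdg0.fun_mul hdu10)),
        Tk.pdy_add (hdgx0.fun_mul hdu0) (hdg0.fun_mul hdu10), Tk.pdy_mul hdgx0 hdu0,
        Tk.pdy_mul hdg0 hdu10, Tk.pdy_comp_fst hu0, Tk.pdy_comp_fst hu10]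
      norm_num [s1, s1', hgy, hgy', hg0, hg0', Tk.uf_zero, Tk.uf1_zero]
    rw [show PXv g = fun q : ℝ × ℝ => ![pdx g q, 1 + (pdx g q * q.1 + g q), 0,
        Tk.uf1 q.1 + (pdx g q * Tk.uf q.1 + g q * Tk.uf1 q.1)] from rfl,
      Tk.pdy_vec4 hdgx0 ((differentiableAt_const 1).fun_add ((hdgx0.fun_mul Tk.diff_fst).fun_add hdg0))
        (differentiableAt_const 0) (hdu10.fun_add ((hdgx0.fun_mul hdu0).fun_add (hdg0.fun_mul hdu10))),
      c1, Tk.pdy_const, c3, s1]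
  have dxPXX0 : pdx (PXXv g) ((0,0) : ℝ × ℝ) = ![a, 3 * k + 3 / 2, 0, a] := by
    have c1 : pdx (fun q : ℝ × ℝ => pdx (pdx g) q * q.1 + 2 * pdx g q) ((0,0) : ℝ × ℝ)
        = 3 * k + 3 / 2 := by
      rw [Tk.pdx_add (hdgxx0.fun_mul Tk.diff_fst) d2gx0, Tk.pdx_mul hdgxx0 Tk.diff_fst, Tk.pdx_fst,
        Tk.pdx_mul (differentiableAt_const 2) hdgx0, Tk.pdx_const, hgxxx, hgxx]
      norm_num
      try ring
    have c3 : pdx (fun q : ℝ × ℝ => Tk.uf2 q.1 + (pdx (pdx g) q * Tk.uf q.1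
        + 2 * pdx g q * Tk.uf1 q.1 + g q * Tk.uf2 q.1)) ((0,0) : ℝ × ℝ) = a := by
      rw [Tk.pdx_add hdu20 (((hdgxx0.fun_mul hdu0).fun_add (d2gx0.fun_mul hdu10)).fun_add (hdg0.fun_mul hdu20)),
        Tk.pdx_add ((hdgxx0.fun_mul hdu0).fun_add (d2gx0.fun_mul hdu10)) (hdg0.fun_mul hdu20),
        Tk.pdx_add (hdgxx0.fun_mul hdu0) (d2gx0.fun_mul hdu10),
        Tk.pdx_mul hdgxx0 hdu0, Tk.pdx_mul d2gx0 hdu10, Tk.pdx_mul hdg0 hdu20,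
        Tk.pdx_mul (differentiableAt_const 2) hdgx0,
        Tk.pdx_comp_fst hu0, Tk.pdx_comp_fst hu10, Tk.pdx_comp_fst hu20,
        Tk.pdx_const, hgxxx, hgxx, hgx, hg0]
      norm_num [Tk.uf_zero, Tk.uf1_zero, Tk.uf2_zero]
    rw [show PXXv g = fun q : ℝ × ℝ => ![pdx (pdx g) q, pdx (pdx g) q * q.1 + 2 * pdx g q, 0,
        Tk.uf2 q.1 + (pdx (pdx g) q * Tk.uf q.1 + 2 * pdx g q * Tk.uf1 q.1 + g q * Tk.uf2 q.1)]
        from rfl,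
      Tk.pdx_vec4 hdgxx0 ((hdgxx0.fun_mul Tk.diff_fst).fun_add d2gx0) (differentiableAt_const 0)
        (hdu20.fun_add (((hdgxx0.fun_mul hdu0).fun_add (d2gx0.fun_mul hdu10)).fun_add (hdg0.fun_mul hdu20))),
      c1, c3, Tk.pdx_const, hgxxx]
  have dyPXX0 : pdy (PXXv g) ((0,0) : ℝ × ℝ) = ![0, 0, 0, 0] := by
    have c1 : pdy (fun q : ℝ × ℝ => pdx (pdx g) q * q.1 + 2 * pdx g q) ((0,0) : ℝ × ℝ) = 0 := by
      rw [Tk.pdy_add (hdgxx0.fun_mul Tk.diff_fst) d2gx0, Tk.pdy_mul hdgxx0 Tk.diff_fst, Tk.pdy_fst,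
        Tk.pdy_mul (differentiableAt_const 2) hdgx0, Tk.pdy_const, s2, s1]
      norm_num
    have c3 : pdy (fun q : ℝ × ℝ => Tk.uf2 q.1 + (pdx (pdx g) q * Tk.uf q.1
        + 2 * pdx g q * Tk.uf1 q.1 + g q * Tk.uf2 q.1)) ((0,0) : ℝ × ℝ) = 0 := by
      rw [Tk.pdy_add hdu20 (((hdgxx0.fun_mul hdu0).fun_add (d2gx0.fun_mul hdu10)).fun_add (hdg0.fun_mul hdu20)),
        Tk.pdy_add ((hdgxx0.fun_mul hdu0).fun_add (d2gx0.fun_mul hdu10)) (hdg0.fun_mul hdu20),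
        Tk.pdy_add (hdgxx0.fun_mul hdu0) (d2gx0.fun_mul hdu10),
        Tk.pdy_mul hdgxx0 hdu0, Tk.pdy_mul d2gx0 hdu10, Tk.pdy_mul hdg0 hdu20,
        Tk.pdy_mul (differentiableAt_const 2) hdgx0,
        Tk.pdy_comp_fst hu0, Tk.pdy_comp_fst hu10, Tk.pdy_comp_fst hu20,
        Tk.pdy_const, s2, s1, hgy, hg0]
      norm_num [Tk.uf_zero, Tk.uf1_zero, Tk.uf2_zero]
    rw [show PXXv g = fun q : ℝ × ℝ => ![pdx (pdx g) q, pdx (pdx g) q * q.1 + 2 * pdx g q, 0,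
        Tk.uf2 q.1 + (pdx (pdx g) q * Tk.uf q.1 + 2 * pdx g q * Tk.uf1 q.1 + g q * Tk.uf2 q.1)]
        from rfl,
      Tk.pdy_vec4 hdgxx0 ((hdgxx0.fun_mul Tk.diff_fst).fun_add d2gx0) (differentiableAt_const 0)
        (hdu20.fun_add (((hdgxx0.fun_mul hdu0).fun_add (d2gx0.fun_mul hdu10)).fun_add (hdg0.fun_mul hdu20))),
      c1, c3, Tk.pdy_const, s2]
  have dxPXY0 : pdx (PXYv g) ((0,0) : ℝ × ℝ) = ![0, 0, 0, 0] := by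
    have c1 : pdx (fun q : ℝ × ℝ => pdx (pdy g) q * q.1 + pdy g q) ((0,0) : ℝ × ℝ) = 0 := by
      rw [Tk.pdx_add (hdgxy0.fun_mul Tk.diff_fst) hdgy0, Tk.pdx_mul hdgxy0 Tk.diff_fst, Tk.pdx_fst,
        hgxxy, hgxy]
      norm_num
    have c3 : pdx (fun q : ℝ × ℝ => pdx (pdy g) q * Tk.uf q.1 + pdy g q * Tk.uf1 q.1)
        ((0,0) : ℝ × ℝ) = 0 := by
      rw [Tk.pdx_add (hdgxy0.fun_mul hdu0) (hdgy0.fun_mul hdu10), Tk.pdx_mul hdgxy0 hdu0,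
        Tk.pdx_mul hdgy0 hdu10, Tk.pdx_comp_fst hu0, Tk.pdx_comp_fst hu10,
        hgxxy, hgxy, hgy]
      norm_num [Tk.uf_zero, Tk.uf1_zero, Tk.uf2_zero]
    rw [show PXYv g = fun q : ℝ × ℝ => ![pdx (pdy g) q, pdx (pdy g) q * q.1 + pdy g q, 0,
        pdx (pdy g) q * Tk.uf q.1 + pdy g q * Tk.uf1 q.1] from rfl,
      Tk.pdx_vec4 hdgxy0 ((hdgxy0.fun_mul Tk.diff_fst).fun_add hdgy0) (differentiableAt_const 0)
        ((hdgxy0.fun_mul hdu0).fun_add (hdgy0.fun_mul hdu10)),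
      c1, c3, Tk.pdx_const, hgxxy]
  have dyPXY0 : pdy (PXYv g) ((0,0) : ℝ × ℝ) = ![b, k, 0, b] := by
    have c1 : pdy (fun q : ℝ × ℝ => pdx (pdy g) q * q.1 + pdy g q) ((0,0) : ℝ × ℝ) = k := by
      rw [Tk.pdy_add (hdgxy0.fun_mul Tk.diff_fst) hdgy0, Tk.pdy_mul hdgxy0 Tk.diff_fst, Tk.pdy_fst,
        s3, hgxy, hgyy]
      norm_num
    have c3 : pdy (fun q : ℝ × ℝ => pdx (pdy g) q * Tk.uf q.1 + pdy g q * Tk.uf1 q.1)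
        ((0,0) : ℝ × ℝ) = b := by
      rw [Tk.pdy_add (hdgxy0.fun_mul hdu0) (hdgy0.fun_mul hdu10), Tk.pdy_mul hdgxy0 hdu0,
        Tk.pdy_mul hdgy0 hdu10, Tk.pdy_comp_fst hu0, Tk.pdy_comp_fst hu10,
        s3, hgxy, hgyy, hgy]
      norm_num [Tk.uf_zero, Tk.uf1_zero]
    rw [show PXYv g = fun q : ℝ × ℝ => ![pdx (pdy g) q, pdx (pdy g) q * q.1 + pdy g q, 0,
        pdx (pdy g) q * Tk.uf q.1 + pdy g q * Tk.uf1 q.1] from rfl,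
      Tk.pdy_vec4 hdgxy0 ((hdgxy0.fun_mul Tk.diff_fst).fun_add hdgy0) (differentiableAt_const 0)
        ((hdgxy0.fun_mul hdu0).fun_add (hdgy0.fun_mul hdu10)),
      c1, c3, Tk.pdy_const, s3]
  have dxPYY0 : pdx (PYYv g) ((0,0) : ℝ × ℝ) = ![b, k, 0, b] := by
    have c1 : pdx (fun q : ℝ × ℝ => pdy (pdy g) q * q.1) ((0,0) : ℝ × ℝ) = k := by
      rw [Tk.pdx_mul hdgyy0 Tk.diff_fst, Tk.pdx_fst, hgxyy, hgyy]
      norm_num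
    have c3 : pdx (fun q : ℝ × ℝ => pdy (pdy g) q * Tk.uf q.1) ((0,0) : ℝ × ℝ) = b := by
      rw [Tk.pdx_mul hdgyy0 hdu0, Tk.pdx_comp_fst hu0, hgxyy, hgyy]
      norm_num [Tk.uf_zero, Tk.uf1_zero]
    rw [show PYYv g = fun q : ℝ × ℝ => ![pdy (pdy g) q, pdy (pdy g) q * q.1, 0,
        pdy (pdy g) q * Tk.uf q.1] from rfl,
      Tk.pdx_vec4 hdgyy0 (hdgyy0.fun_mul Tk.diff_fst) (differentiableAt_const 0) (hdgyy0.fun_mul hdu0),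
      c1, c3, Tk.pdx_const, hgxyy]
  have dyPYY0 : pdy (PYYv g) ((0,0) : ℝ × ℝ) = ![c, 0, 0, c] := by
    have c1 : pdy (fun q : ℝ × ℝ => pdy (pdy g) q * q.1) ((0,0) : ℝ × ℝ) = 0 := by
      rw [Tk.pdy_mul hdgyy0 Tk.diff_fst, Tk.pdy_fst, hgyyy, hgyy]
      norm_num
    have c3 : pdy (fun q : ℝ × ℝ => pdy (pdy g) q * Tk.uf q.1) ((0,0) : ℝ × ℝ) = c := by
      rw [Tk.pdy_mul hdgyy0 hdu0, Tk.pdy_comp_fst hu0, hgyyy, hgyy]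
      norm_num [Tk.uf_zero, Tk.uf1_zero]
    rw [show PYYv g = fun q : ℝ × ℝ => ![pdy (pdy g) q, pdy (pdy g) q * q.1, 0,
        pdy (pdy g) q * Tk.uf q.1] from rfl,
      Tk.pdy_vec4 hdgyy0 (hdgyy0.fun_mul Tk.diff_fst) (differentiableAt_const 0) (hdgyy0.fun_mul hdu0),
      c1, c3, Tk.pdy_const, hgyyy]
  
  -- the normal field η at the origin
  have hηd : DifferentiableAt ℝ η ((0,0) : ℝ × ℝ) :=
    (hη.contDiffAt hU).differentiableAt one_ne_zero
  have hξdef : xiCyl = fun q : ℝ × ℝ => ![(1:ℝ), q.1, (0:ℝ), Tk.uf q.1] := rfl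
  have dξ0 : DifferentiableAt ℝ xiCyl ((0,0) : ℝ × ℝ) := by
    rw [hξdef]
    exact Tk.diff_vec4 (differentiableAt_const 1) Tk.diff_fst (differentiableAt_const 0) hdu0
  have vξ : xiCyl ((0,0) : ℝ × ℝ) = ![1, 0, 0, 1] := by
    funext i
    fin_cases i <;> norm_num [xiCyl]
  have dxξ : pdx xiCyl ((0,0) : ℝ × ℝ) = ![0, 1, 0, 0] := by
    rw [hξdef, Tk.pdx_vec4 (differentiableAt_const 1) Tk.diff_fst (differentiableAt_const 0) hdu0,
      Tk.pdx_const, Tk.pdx_const, Tk.pdx_fst, Tk.pdx_comp_fst hu0]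
    funext i
    fin_cases i <;> norm_num [Tk.uf1_zero]
  have dyξ : pdy xiCyl ((0,0) : ℝ × ℝ) = ![0, 0, 0, 0] := by
    rw [hξdef, Tk.pdy_vec4 (differentiableAt_const 1) Tk.diff_fst (differentiableAt_const 0) hdu0,
      Tk.pdy_const, Tk.pdy_const, Tk.pdy_fst, Tk.pdy_comp_fst hu0]
    try (funext i; fin_cases i <;> norm_num)
  -- values of η at the origin
  have hη1 : η ((0,0) : ℝ × ℝ) 1 = 0 := by
    have h := h3 _ h0U
    rw [hPX _ h0Ω, vPX] at h
    simp only [mink, Matrix.cons_val_zero, Matrix.cons_val_one, Matrix.head_cons,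
      Matrix.cons_val_two, Matrix.tail_cons, Matrix.cons_val_three, mul_zero, mul_one,
      add_zero, zero_add, neg_zero] at h
    linarith [h]
  have hη2 : η ((0,0) : ℝ × ℝ) 2 = 0 := by
    have h := h4 _ h0U
    rw [hPY _ h0Ω, vPY] at h
    simp only [mink, Matrix.cons_val_zero, Matrix.cons_val_one, Matrix.head_cons,
      Matrix.cons_val_two, Matrix.tail_cons, Matrix.cons_val_three, mul_zero, mul_one,
      add_zero, zero_add, neg_zero] at h
    linarith [h]
  have eξv : -(η ((0,0) : ℝ × ℝ) 0) + η ((0,0) : ℝ × ℝ) 3 = 1 := by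
    have h := h1 _ h0U
    rw [vξ] at h
    simp only [mink, Matrix.cons_val_zero, Matrix.cons_val_one, Matrix.head_cons,
      Matrix.cons_val_two, Matrix.tail_cons, Matrix.cons_val_three, mul_zero, mul_one,
      add_zero, zero_add, neg_zero] at h
    linarith [h]
  have eηq : -(η ((0,0) : ℝ × ℝ) 0 * η ((0,0) : ℝ × ℝ) 0)
      + η ((0,0) : ℝ × ℝ) 3 * η ((0,0) : ℝ × ℝ) 3 = 0 := by
    have h := h2 _ h0U
    simp only [mink, hη1, hη2, mul_zero, zero_mul, add_zero] at h
    linarith [h]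
  have hη0 : η ((0,0) : ℝ × ℝ) 0 = -(1/2) := by
    linear_combination (1/2) * eηq
      - (1/2) * (η ((0,0) : ℝ × ℝ) 3 + η ((0,0) : ℝ × ℝ) 0 + 1) * eξv
  have hη3 : η ((0,0) : ℝ × ℝ) 3 = 1/2 := by linarith [eξv, hη0]
  -- first derivatives of η at the origin
  have hξx : -(pdx η ((0,0) : ℝ × ℝ) 0) + pdx η ((0,0) : ℝ × ℝ) 3 = 0 := by
    have hev : (fun r => mink (η r) (xiCyl r)) =ᶠ[nhds ((0,0) : ℝ × ℝ)] fun _ => 1 := by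
      filter_upwards [hU] with r hr using h1 r hr
    have h := Tk.pdx_mink hηd dξ0
    rw [Tk.pdx_congr hev, Tk.pdx_const, vξ, dxξ] at h
    simp only [mink, Matrix.cons_val_zero, Matrix.cons_val_one, Matrix.head_cons,
      Matrix.cons_val_two, Matrix.tail_cons, Matrix.cons_val_three, mul_zero, mul_one,
      add_zero, zero_add, neg_zero, hη1] at h
    linarith [h]
  have hξy : -(pdy η ((0,0) : ℝ × ℝ) 0) + pdy η ((0,0) : ℝ × ℝ) 3 = 0 := by
    have hev : (fun r => mink (η r) (xiCyl r)) =ᶠ[nhds ((0,0) : ℝ × ℝ)] fun _ => 1 := by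
      filter_upwards [hU] with r hr using h1 r hr
    have h := Tk.pdy_mink hηd dξ0
    rw [Tk.pdy_congr hev, Tk.pdy_const, vξ, dyξ] at h
    simp only [mink, Matrix.cons_val_zero, Matrix.cons_val_one, Matrix.head_cons,
      Matrix.cons_val_two, Matrix.tail_cons, Matrix.cons_val_three, mul_zero, mul_one,
      add_zero, zero_add, neg_zero, hη1] at h
    linarith [h]
  have hηx : pdx η ((0,0) : ℝ × ℝ) 0 + pdx η ((0,0) : ℝ × ℝ) 3 = 0 := by
    have hev : (fun r => mink (η r) (η r)) =ᶠ[nhds ((0,0) : ℝ × ℝ)] fun _ => 0 := by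
      filter_upwards [hU] with r hr using h2 r hr
    have h := Tk.pdx_mink hηd hηd
    rw [Tk.pdx_congr hev, Tk.pdx_const] at h
    simp only [mink, hη0, hη1, hη2, hη3, mul_zero, zero_mul, add_zero, neg_zero] at h
    linarith [h]
  have hηy : pdy η ((0,0) : ℝ × ℝ) 0 + pdy η ((0,0) : ℝ × ℝ) 3 = 0 := by
    have hev : (fun r => mink (η r) (η r)) =ᶠ[nhds ((0,0) : ℝ × ℝ)] fun _ => 0 := by
      filter_upwards [hU] with r hr using h2 r hr
    have h := Tk.pdy_mink hηd hηd
    rw [Tk.pdy_congr hev, Tk.pdy_const] at h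
    simp only [mink, hη0, hη1, hη2, hη3, mul_zero, zero_mul, add_zero, neg_zero] at h
    linarith [h]
  have hX0 : pdx η ((0,0) : ℝ × ℝ) 0 = 0 := by linarith [hξx, hηx]
  have hX3 : pdx η ((0,0) : ℝ × ℝ) 3 = 0 := by linarith [hξx, hηx]
  have hY0 : pdy η ((0,0) : ℝ × ℝ) 0 = 0 := by linarith [hξy, hηy]
  have hY3 : pdy η ((0,0) : ℝ × ℝ) 3 = 0 := by linarith [hξy, hηy]
  have hevPX : (fun r => mink (η r) (PXv g r)) =ᶠ[nhds ((0,0) : ℝ × ℝ)] fun _ => 0 := by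
    filter_upwards [hU, hOo.mem_nhds h0Ω] with r hrU hrΩ
    rw [← hPX r hrΩ]
    exact h3 r hrU
  have hevPY : (fun r => mink (η r) (PYv g r)) =ᶠ[nhds ((0,0) : ℝ × ℝ)] fun _ => 0 := by
    filter_upwards [hU, hOo.mem_nhds h0Ω] with r hrU hrΩ
    rw [← hPY r hrΩ]
    exact h4 r hrU
  have hX1 : pdx η ((0,0) : ℝ × ℝ) 1 = -k := by
    have h := Tk.pdx_mink hηd dPX0
    rw [Tk.pdx_congr hevPX, Tk.pdx_const, vPX, hPXXcore _ h0Ω, vPXX] at h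
    simp only [mink, Matrix.cons_val_zero, Matrix.cons_val_one, Matrix.head_cons,
      Matrix.cons_val_two, Matrix.tail_cons, Matrix.cons_val_three, mul_zero, mul_one,
      add_zero, zero_add, neg_zero, hη0, hη1, hη2, hη3] at h
    linarith [h]
  have hX2 : pdx η ((0,0) : ℝ × ℝ) 2 = 0 := by
    have h := Tk.pdx_mink hηd dPY0
    rw [Tk.pdx_congr hevPY, Tk.pdx_const, vPY, hPXYcore _ h0Ω, vPXY] at h
    simp only [mink, Matrix.cons_val_zero, Matrix.cons_val_one, Matrix.head_cons,
      Matrix.cons_val_two, Matrix.tail_cons, Matrix.cons_val_three, mul_zero, mul_one,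
      add_zero, zero_add, neg_zero, hη0, hη1, hη2, hη3] at h
    linarith [h]
  have hY1 : pdy η ((0,0) : ℝ × ℝ) 1 = 0 := by
    have h := Tk.pdy_mink hηd dPX0
    rw [Tk.pdy_congr hevPX, Tk.pdy_const, vPX, dyPX0] at h
    simp only [mink, Matrix.cons_val_zero, Matrix.cons_val_one, Matrix.head_cons,
      Matrix.cons_val_two, Matrix.tail_cons, Matrix.cons_val_three, mul_zero, mul_one,
      add_zero, zero_add, neg_zero, hη0, hη1, hη2, hη3] at h
    linarith [h]
  have hY2 : pdy η ((0,0) : ℝ × ℝ) 2 = -k := by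
    have h := Tk.pdy_mink hηd dPY0
    rw [Tk.pdy_congr hevPY, Tk.pdy_const, vPY, hPYYcore _ h0Ω, vPYY] at h
    simp only [mink, Matrix.cons_val_zero, Matrix.cons_val_one, Matrix.head_cons,
      Matrix.cons_val_two, Matrix.tail_cons, Matrix.cons_val_three, mul_zero, mul_one,
      add_zero, zero_add, neg_zero, hη0, hη1, hη2, hη3] at h
    linarith [h]
  
  -- differentiability of the coefficient building blocks at the origin
  have def0 : DifferentiableAt ℝ (fun q => mink (PXXv g q) (η q)) ((0,0) : ℝ × ℝ) :=
    Tk.diff_mink dPXX0 hηd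
  have dff0 : DifferentiableAt ℝ (fun q => mink (PXYv g q) (η q)) ((0,0) : ℝ × ℝ) :=
    Tk.diff_mink dPXY0 hηd
  have dgf0 : DifferentiableAt ℝ (fun q => mink (PYYv g q) (η q)) ((0,0) : ℝ × ℝ) :=
    Tk.diff_mink dPYY0 hηd
  have dEf0 : DifferentiableAt ℝ (fun q => mink (PXv g q) (PXv g q)) ((0,0) : ℝ × ℝ) :=
    Tk.diff_mink dPX0 dPX0
  have dFf0 : DifferentiableAt ℝ (fun q => mink (PXv g q) (PYv g q)) ((0,0) : ℝ × ℝ) :=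
    Tk.diff_mink dPX0 dPY0
  have dGf0 : DifferentiableAt ℝ (fun q => mink (PYv g q) (PYv g q)) ((0,0) : ℝ × ℝ) :=
    Tk.diff_mink dPY0 dPY0
  -- values of the fundamental form coefficients at the origin
  have vef : mink (PXXv g ((0,0) : ℝ × ℝ)) (η ((0,0) : ℝ × ℝ)) = k := by
    rw [vPXX]
    simp only [mink, Matrix.cons_val_zero, Matrix.cons_val_one, Matrix.head_cons,
      Matrix.cons_val_two, Matrix.tail_cons, Matrix.cons_val_three, mul_zero, mul_one,
      add_zero, zero_add, neg_zero, zero_mul, one_mul, neg_neg, hη0, hη1, hη2, hη3]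
    ring
  have vff : mink (PXYv g ((0,0) : ℝ × ℝ)) (η ((0,0) : ℝ × ℝ)) = 0 := by
    rw [vPXY]
    simp only [mink, Matrix.cons_val_zero, Matrix.cons_val_one, Matrix.head_cons,
      Matrix.cons_val_two, Matrix.tail_cons, Matrix.cons_val_three, mul_zero, mul_one,
      add_zero, zero_add, neg_zero, zero_mul, one_mul, neg_neg]
  have vgf : mink (PYYv g ((0,0) : ℝ × ℝ)) (η ((0,0) : ℝ × ℝ)) = k := by
    rw [vPYY]
    simp only [mink, Matrix.cons_val_zero, Matrix.cons_val_one, Matrix.head_cons,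
      Matrix.cons_val_two, Matrix.tail_cons, Matrix.cons_val_three, mul_zero, mul_one,
      add_zero, zero_add, neg_zero, zero_mul, one_mul, neg_neg, hη0, hη1, hη2, hη3]
    ring
  have vEf : mink (PXv g ((0,0) : ℝ × ℝ)) (PXv g ((0,0) : ℝ × ℝ)) = 1 := by
    rw [vPX]; simp only [mink, Matrix.cons_val_zero, Matrix.cons_val_one, Matrix.head_cons,
      Matrix.cons_val_two, Matrix.tail_cons, Matrix.cons_val_three, mul_zero, mul_one,
      add_zero, zero_add, neg_zero, zero_mul, one_mul, neg_neg]
  have vFf : mink (PXv g ((0,0) : ℝ × ℝ)) (PYv g ((0,0) : ℝ × ℝ)) = 0 := by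
    rw [vPX, vPY]; simp only [mink, Matrix.cons_val_zero, Matrix.cons_val_one, Matrix.head_cons,
      Matrix.cons_val_two, Matrix.tail_cons, Matrix.cons_val_three, mul_zero, mul_one,
      add_zero, zero_add, neg_zero, zero_mul, one_mul, neg_neg]
  have vGf : mink (PYv g ((0,0) : ℝ × ℝ)) (PYv g ((0,0) : ℝ × ℝ)) = 1 := by
    rw [vPY]; simp only [mink, Matrix.cons_val_zero, Matrix.cons_val_one, Matrix.head_cons,
      Matrix.cons_val_two, Matrix.tail_cons, Matrix.cons_val_three, mul_zero, mul_one,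
      add_zero, zero_add, neg_zero, zero_mul, one_mul, neg_neg]
  -- derivatives of the coefficients at the origin
  have dxef : pdx (fun q => mink (PXXv g q) (η q)) ((0,0) : ℝ × ℝ) = a := by
    rw [Tk.pdx_mink dPXX0 hηd, dxPXX0, vPXX]
    simp only [mink, Matrix.cons_val_zero, Matrix.cons_val_one, Matrix.head_cons,
      Matrix.cons_val_two, Matrix.tail_cons, Matrix.cons_val_three, mul_zero, mul_one,
      add_zero, zero_add, neg_zero, zero_mul, one_mul, neg_neg, hη0, hη1, hη2, hη3, hX0, hX1, hX2, hX3]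
    ring
  have dyef : pdy (fun q => mink (PXXv g q) (η q)) ((0,0) : ℝ × ℝ) = 0 := by
    rw [Tk.pdy_mink dPXX0 hηd, dyPXX0, vPXX]
    simp only [mink, Matrix.cons_val_zero, Matrix.cons_val_one, Matrix.head_cons,
      Matrix.cons_val_two, Matrix.tail_cons, Matrix.cons_val_three, mul_zero, mul_one,
      add_zero, zero_add, neg_zero, zero_mul, one_mul, neg_neg, hη0, hη1, hη2, hη3, hY0, hY1, hY2, hY3]
    try ring
  have dxff : pdx (fun q => mink (PXYv g q) (η q)) ((0,0) : ℝ × ℝ) = 0 := by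
    rw [Tk.pdx_mink dPXY0 hηd, dxPXY0, vPXY]
    simp only [mink, Matrix.cons_val_zero, Matrix.cons_val_one, Matrix.head_cons,
      Matrix.cons_val_two, Matrix.tail_cons, Matrix.cons_val_three, mul_zero, mul_one,
      add_zero, zero_add, neg_zero, zero_mul, one_mul, neg_neg]
  have dyff : pdy (fun q => mink (PXYv g q) (η q)) ((0,0) : ℝ × ℝ) = b := by
    rw [Tk.pdy_mink dPXY0 hηd, dyPXY0, vPXY]
    simp only [mink, Matrix.cons_val_zero, Matrix.cons_val_one, Matrix.head_cons,
      Matrix.cons_val_two, Matrix.tail_cons, Matrix.cons_val_three, mul_zero, mul_one,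
      add_zero, zero_add, neg_zero, zero_mul, one_mul, neg_neg, hη0, hη1, hη2, hη3]
    ring
  have dxgf : pdx (fun q => mink (PYYv g q) (η q)) ((0,0) : ℝ × ℝ) = b := by
    rw [Tk.pdx_mink dPYY0 hηd, dxPYY0, vPYY]
    simp only [mink, Matrix.cons_val_zero, Matrix.cons_val_one, Matrix.head_cons,
      Matrix.cons_val_two, Matrix.tail_cons, Matrix.cons_val_three, mul_zero, mul_one,
      add_zero, zero_add, neg_zero, zero_mul, one_mul, neg_neg, hη0, hη1, hη2, hη3, hX0, hX1, hX2, hX3]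
    ring
  have dygf : pdy (fun q => mink (PYYv g q) (η q)) ((0,0) : ℝ × ℝ) = c := by
    rw [Tk.pdy_mink dPYY0 hηd, dyPYY0, vPYY]
    simp only [mink, Matrix.cons_val_zero, Matrix.cons_val_one, Matrix.head_cons,
      Matrix.cons_val_two, Matrix.tail_cons, Matrix.cons_val_three, mul_zero, mul_one,
      add_zero, zero_add, neg_zero, zero_mul, one_mul, neg_neg, hη0, hη1, hη2, hη3, hY0, hY1, hY2, hY3]
    ring
  have dxEf : pdx (fun q => mink (PXv g q) (PXv g q)) ((0,0) : ℝ × ℝ) = 0 := by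
    rw [Tk.pdx_mink dPX0 dPX0, hPXXcore _ h0Ω, vPXX, vPX]
    simp only [mink, Matrix.cons_val_zero, Matrix.cons_val_one, Matrix.head_cons,
      Matrix.cons_val_two, Matrix.tail_cons, Matrix.cons_val_three, mul_zero, mul_one,
      add_zero, zero_add, neg_zero, zero_mul, one_mul, neg_neg]
    try ring
  have dyEf : pdy (fun q => mink (PXv g q) (PXv g q)) ((0,0) : ℝ × ℝ) = 0 := by
    rw [Tk.pdy_mink dPX0 dPX0, dyPX0, vPX]
    simp only [mink, Matrix.cons_val_zero, Matrix.cons_val_one, Matrix.head_cons,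
      Matrix.cons_val_two, Matrix.tail_cons, Matrix.cons_val_three, mul_zero, mul_one,
      add_zero, zero_add, neg_zero, zero_mul, one_mul, neg_neg]
  have dxFf : pdx (fun q => mink (PXv g q) (PYv g q)) ((0,0) : ℝ × ℝ) = 0 := by
    rw [Tk.pdx_mink dPX0 dPY0, hPXXcore _ h0Ω, hPXYcore _ h0Ω, vPXX, vPXY, vPX, vPY]
    simp only [mink, Matrix.cons_val_zero, Matrix.cons_val_one, Matrix.head_cons,
      Matrix.cons_val_two, Matrix.tail_cons, Matrix.cons_val_three, mul_zero, mul_one,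
      add_zero, zero_add, neg_zero, zero_mul, one_mul, neg_neg]
    try ring
  have dyFf : pdy (fun q => mink (PXv g q) (PYv g q)) ((0,0) : ℝ × ℝ) = 0 := by
    rw [Tk.pdy_mink dPX0 dPY0, dyPX0, hPYYcore _ h0Ω, vPYY, vPX, vPY]
    simp only [mink, Matrix.cons_val_zero, Matrix.cons_val_one, Matrix.head_cons,
      Matrix.cons_val_two, Matrix.tail_cons, Matrix.cons_val_three, mul_zero, mul_one,
      add_zero, zero_add, neg_zero, zero_mul, one_mul, neg_neg]
    try ring
  have dxGf : pdx (fun q => mink (PYv g q) (PYv g q)) ((0,0) : ℝ × ℝ) = 0 := by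
    rw [Tk.pdx_mink dPY0 dPY0, hPXYcore _ h0Ω, vPXY, vPY]
    simp only [mink, Matrix.cons_val_zero, Matrix.cons_val_one, Matrix.head_cons,
      Matrix.cons_val_two, Matrix.tail_cons, Matrix.cons_val_three, mul_zero, mul_one,
      add_zero, zero_add, neg_zero, zero_mul, one_mul, neg_neg]
  have dyGf : pdy (fun q => mink (PYv g q) (PYv g q)) ((0,0) : ℝ × ℝ) = 0 := by
    rw [Tk.pdy_mink dPY0 dPY0, hPYYcore _ h0Ω, vPYY, vPY]
    simp only [mink, Matrix.cons_val_zero, Matrix.cons_val_one, Matrix.head_cons,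
      Matrix.cons_val_two, Matrix.tail_cons, Matrix.cons_val_three, mul_zero, mul_one,
      add_zero, zero_add, neg_zero, zero_mul, one_mul, neg_neg]
    try ring
  -- expressions for the coefficients A, B, C
  have hAexp : ∀ q ∈ Ω, AcoefP (PhiCyl g) η q =
      mink (PXYv g q) (η q) * mink (PYv g q) (PYv g q)
        - mink (PYYv g q) (η q) * mink (PXv g q) (PYv g q) := by
    intro q hq
    simp only [AcoefP, fEtaP, GcoefP, gEtaP, FcoefP]
    rw [hPXY q hq, hPYY q hq, hPX q hq, hPY q hq]
  have hBexp : ∀ q ∈ Ω, BcoefP (PhiCyl g) η q =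
      mink (PXXv g q) (η q) * mink (PYv g q) (PYv g q)
        - mink (PYYv g q) (η q) * mink (PXv g q) (PXv g q) := by
    intro q hq
    simp only [BcoefP, eEtaP, GcoefP, gEtaP, EcoefP]
    rw [hPXX q hq, hPYY q hq, hPX q hq, hPY q hq]
  have hCexp : ∀ q ∈ Ω, CcoefP (PhiCyl g) η q =
      mink (PXXv g q) (η q) * mink (PXv g q) (PYv g q)
        - mink (PXYv g q) (η q) * mink (PXv g q) (PXv g q) := by
    intro q hq
    simp only [CcoefP, eEtaP, FcoefP, fEtaP, EcoefP]
    rw [hPXX q hq, hPXY q hq, hPX q hq, hPY q hq]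
  have hevA : AcoefP (PhiCyl g) η =ᶠ[nhds ((0,0) : ℝ × ℝ)]
      (fun q => mink (PXYv g q) (η q) * mink (PYv g q) (PYv g q)
        - mink (PYYv g q) (η q) * mink (PXv g q) (PYv g q)) := by
    filter_upwards [hOo.mem_nhds h0Ω] with r hr using hAexp r hr
  have hevB : BcoefP (PhiCyl g) η =ᶠ[nhds ((0,0) : ℝ × ℝ)]
      (fun q => mink (PXXv g q) (η q) * mink (PYv g q) (PYv g q)
        - mink (PYYv g q) (η q) * mink (PXv g q) (PXv g q)) := by
    filter_upwards [hOo.mem_nhds h0Ω] with r hr using hBexp r hr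
  have hevC : CcoefP (PhiCyl g) η =ᶠ[nhds ((0,0) : ℝ × ℝ)]
      (fun q => mink (PXXv g q) (η q) * mink (PXv g q) (PYv g q)
        - mink (PXYv g q) (η q) * mink (PXv g q) (PXv g q)) := by
    filter_upwards [hOo.mem_nhds h0Ω] with r hr using hCexp r hr
  have dA1 : DifferentiableAt ℝ
      (fun q : ℝ × ℝ => mink (PXYv g q) (η q) * mink (PYv g q) (PYv g q)) ((0,0) : ℝ × ℝ) :=
    dff0.fun_mul dGf0
  have dA2 : DifferentiableAt ℝ
      (fun q : ℝ × ℝ => mink (PYYv g q) (η q) * mink (PXv g q) (PYv g q)) ((0,0) : ℝ × ℝ) :=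
    dgf0.fun_mul dFf0
  have dB1 : DifferentiableAt ℝ
      (fun q : ℝ × ℝ => mink (PXXv g q) (η q) * mink (PYv g q) (PYv g q)) ((0,0) : ℝ × ℝ) :=
    def0.fun_mul dGf0
  have dB2 : DifferentiableAt ℝ
      (fun q : ℝ × ℝ => mink (PYYv g q) (η q) * mink (PXv g q) (PXv g q)) ((0,0) : ℝ × ℝ) :=
    dgf0.fun_mul dEf0
  have dC1 : DifferentiableAt ℝ
      (fun q : ℝ × ℝ => mink (PXXv g q) (η q) * mink (PXv g q) (PYv g q)) ((0,0) : ℝ × ℝ) :=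
    def0.fun_mul dFf0
  have dC2 : DifferentiableAt ℝ
      (fun q : ℝ × ℝ => mink (PXYv g q) (η q) * mink (PXv g q) (PXv g q)) ((0,0) : ℝ × ℝ) :=
    dff0.fun_mul dEf0
  refine ⟨?_, ?_, ?_, ?_, ?_, ?_, ?_, ?_, ?_⟩
  · rw [hAexp _ h0Ω, vff, vgf, vFf]
    ring
  · rw [hBexp _ h0Ω, vef, vgf, vEf, vGf]
    ring
  · rw [hCexp _ h0Ω, vef, vff, vEf, vFf]
    ring
  · rw [Tk.pdx_congr hevA, Tk.pdx_sub dA1 dA2, Tk.pdx_mul dff0 dGf0, Tk.pdx_mul dgf0 dFf0,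
      dxff, dxGf, dxgf, dxFf, vff, vGf, vgf, vFf]
    ring
  · rw [Tk.pdy_congr hevA, Tk.pdy_sub dA1 dA2, Tk.pdy_mul dff0 dGf0, Tk.pdy_mul dgf0 dFf0,
      dyff, dyGf, dygf, dyFf, vff, vGf, vgf, vFf]
    ring
  · rw [Tk.pdx_congr hevB, Tk.pdx_sub dB1 dB2, Tk.pdx_mul def0 dGf0, Tk.pdx_mul dgf0 dEf0,
      dxef, dxGf, dxgf, dxEf, vef, vGf, vgf, vEf]
    ring
  · rw [Tk.pdy_congr hevB, Tk.pdy_sub dB1 dB2, Tk.pdy_mul def0 dGf0, Tk.pdy_mul dgf0 dEf0,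
      dyef, dyGf, dygf, dyEf, vef, vGf, vgf, vEf]
    ring
  · rw [Tk.pdx_congr hevC, Tk.pdx_sub dC1 dC2, Tk.pdx_mul def0 dFf0, Tk.pdx_mul dff0 dEf0,
      dxef, dxFf, dxff, dxEf, vef, vFf, vff, vEf]
    ring
  · rw [Tk.pdy_congr hevC, Tk.pdy_sub dC1 dC2, Tk.pdy_mul def0 dFf0, Tk.pdy_mul dff0 dEf0,
      dyef, dyFf, dyff, dyEf, vef, vFf, vff, vEf]
    ring
end
end

section
/- For every (x,y) ∈ (−1,1) × ℝ, the first fundamental form coefficients of Φ satisfy E·G − F² = (1 + g(x,y))²/(1 − x²). In particular, if g(x,y) ≠ −1 for all (x,y), then E·G − F² > 0, so Φ is an immersion onto a spacelike surface contained in the cylinder Λ² × ℝ ⊂ ℝ⁴₁. -/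
noncomputable section

-- helper: explicit derivative
lemma phiDeriv (g : ℝ × ℝ → ℝ)
    (hg : ContDiffOn ℝ (⊤ : ℕ∞) g (Set.Ioo (-1 : ℝ) 1 ×ˢ (Set.univ : Set ℝ)))
    (p : ℝ × ℝ) (hp : p.1 ∈ Set.Ioo (-1 : ℝ) 1) :
    pdx (PhiCyl g) p = ![fderiv ℝ g p (1,0),
        1 + g p + fderiv ℝ g p (1,0) * p.1, 0,
        (1 + g p) * (-p.1 / Real.sqrt (1 - p.1 ^ 2))
          + fderiv ℝ g p (1,0) * Real.sqrt (1 - p.1 ^ 2)] ∧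
    pdy (PhiCyl g) p = ![fderiv ℝ g p (0,1), fderiv ℝ g p (0,1) * p.1, 1,
        fderiv ℝ g p (0,1) * Real.sqrt (1 - p.1 ^ 2)] := by
  have hpos : (0:ℝ) < 1 - p.1 ^ 2 := by nlinarith [hp.1, hp.2]
  have hs : (0:ℝ) < Real.sqrt (1 - p.1 ^ 2) := Real.sqrt_pos.2 hpos
  set s : ℝ := Real.sqrt (1 - p.1 ^ 2) with hs_def
  have hopen : IsOpen (Set.Ioo (-1 : ℝ) 1 ×ˢ (Set.univ : Set ℝ)) :=
    isOpen_Ioo.prod isOpen_univ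
  have hmem : p ∈ Set.Ioo (-1 : ℝ) 1 ×ˢ (Set.univ : Set ℝ) := ⟨hp, trivial⟩
  have hgd : HasFDerivAt g (fderiv ℝ g p) p :=
    (((hg.differentiableOn (by simp)).differentiableAt
      (hopen.mem_nhds hmem))).hasFDerivAt
  set dg : ℝ × ℝ →L[ℝ] ℝ := fderiv ℝ g p with hdg
  -- derivative of the sqrt term
  have hinner : HasFDerivAt (fun q : ℝ × ℝ => 1 - q.1 ^ 2)
      (-((2 * p.1) • ContinuousLinearMap.fst ℝ ℝ ℝ)) p := by
    have h1 : HasFDerivAt (fun q : ℝ × ℝ => q.1 ^ 2)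
        ((2 * p.1) • ContinuousLinearMap.fst ℝ ℝ ℝ) p := by
      have h2 : HasFDerivAt (fun q : ℝ × ℝ => q.1 * q.1)
          (p.1 • ContinuousLinearMap.fst ℝ ℝ ℝ + p.1 • ContinuousLinearMap.fst ℝ ℝ ℝ) p :=
        (hasFDerivAt_fst (𝕜 := ℝ) (p := p)).mul
        (hasFDerivAt_fst (𝕜 := ℝ) (p := p))
      have e : (fun q : ℝ × ℝ => q.1 ^ 2) = fun q : ℝ × ℝ => q.1 * q.1 := by
        funext q; ring
      rw [e]
      convert h2 using 1
      module
    have := h1.const_sub 1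
    simpa using this
  have hsqrt : HasFDerivAt (fun q : ℝ × ℝ => Real.sqrt (1 - q.1 ^ 2))
      ((-p.1 / s) • ContinuousLinearMap.fst ℝ ℝ ℝ) p := by
    have h : HasFDerivAt (fun q : ℝ × ℝ => Real.sqrt (1 - q.1 ^ 2))
        ((1 / (2 * s)) • -((2 * p.1) • ContinuousLinearMap.fst ℝ ℝ ℝ)) p :=
      (hinner.sqrt (ne_of_gt hpos))
    convert h using 1
    refine ContinuousLinearMap.ext fun v => ?_
    simp [hs_def]
    field_simp
  set ds : ℝ × ℝ →L[ℝ] ℝ := (-p.1 / s) • ContinuousLinearMap.fst ℝ ℝ ℝ with hds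
  -- componentwise derivatives
  have c0 : HasFDerivAt (fun q => PhiCyl g q 0) dg p := by
    have e : (fun q => PhiCyl g q 0) = fun q => 1 + g q := by
      funext q; simp [PhiCyl, xiCyl]
    rw [e]; exact hgd.const_add 1
  have c1 : HasFDerivAt (fun q => PhiCyl g q 1)
      (ContinuousLinearMap.fst ℝ ℝ ℝ + (g p • ContinuousLinearMap.fst ℝ ℝ ℝ + p.1 • dg)) p := by
    have e : (fun q => PhiCyl g q 1) = fun q : ℝ × ℝ => q.1 + g q * q.1 := by
      funext q; simp [PhiCyl, xiCyl]
    rw [e]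
    exact (hasFDerivAt_fst).add (hgd.mul hasFDerivAt_fst)
  have c2 : HasFDerivAt (fun q => PhiCyl g q 2) (ContinuousLinearMap.snd ℝ ℝ ℝ) p := by
    have e : (fun q => PhiCyl g q 2) = fun q : ℝ × ℝ => q.2 := by
      funext q; simp [PhiCyl, xiCyl]
    rw [e]; exact hasFDerivAt_snd
  have c3 : HasFDerivAt (fun q => PhiCyl g q 3)
      (ds + (g p • ds + s • dg)) p := by
    have e : (fun q => PhiCyl g q 3) =
        fun q : ℝ × ℝ => Real.sqrt (1 - q.1 ^ 2) + g q * Real.sqrt (1 - q.1 ^ 2) := by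
      funext q; simp [PhiCyl, xiCyl]
    rw [e]
    exact hsqrt.add (hgd.mul hsqrt)
  set φ : Fin 4 → (ℝ × ℝ →L[ℝ] ℝ) :=
    ![dg, ContinuousLinearMap.fst ℝ ℝ ℝ + (g p • ContinuousLinearMap.fst ℝ ℝ ℝ + p.1 • dg),
      ContinuousLinearMap.snd ℝ ℝ ℝ, ds + (g p • ds + s • dg)] with hφ
  have hPhi : HasFDerivAt (PhiCyl g) (ContinuousLinearMap.pi φ) p := by
    apply hasFDerivAt_pi.2
    intro i
    fin_cases i
    · exact c0
    · exact c1
    · exact c2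
    · exact c3
  have hfd : fderiv ℝ (PhiCyl g) p = ContinuousLinearMap.pi φ := hPhi.fderiv
  constructor
  · funext i
    rw [pdx, hfd]
    fin_cases i <;>
      simp [hφ, hds, ContinuousLinearMap.pi_apply] <;> ring
  · funext i
    rw [pdy, hfd]
    fin_cases i <;>
      simp [hφ, hds, ContinuousLinearMap.pi_apply] <;> ring

theorem stmt18 (g : ℝ × ℝ → ℝ)
    (hg : ContDiffOn ℝ (⊤ : ℕ∞) g (Set.Ioo (-1 : ℝ) 1 ×ˢ (Set.univ : Set ℝ))) :
    (∀ p : ℝ × ℝ, p.1 ∈ Set.Ioo (-1 : ℝ) 1 →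
      EcoefP (PhiCyl g) p * GcoefP (PhiCyl g) p - (FcoefP (PhiCyl g) p) ^ 2 =
        (1 + g p) ^ 2 / (1 - p.1 ^ 2)) ∧
    ((∀ p : ℝ × ℝ, p.1 ∈ Set.Ioo (-1 : ℝ) 1 → g p ≠ -1) →
      ∀ p : ℝ × ℝ, p.1 ∈ Set.Ioo (-1 : ℝ) 1 →
        (0 < EcoefP (PhiCyl g) p * GcoefP (PhiCyl g) p - (FcoefP (PhiCyl g) p) ^ 2 ∧
         LinearIndependent ℝ ![pdx (PhiCyl g) p, pdy (PhiCyl g) p])) := by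
  have key : ∀ p : ℝ × ℝ, p.1 ∈ Set.Ioo (-1 : ℝ) 1 →
      EcoefP (PhiCyl g) p * GcoefP (PhiCyl g) p - (FcoefP (PhiCyl g) p) ^ 2 =
        (1 + g p) ^ 2 / (1 - p.1 ^ 2) := by
    intro p hp
    obtain ⟨hx, hy⟩ := phiDeriv g hg p hp
    have hpos : (0:ℝ) < 1 - p.1 ^ 2 := by nlinarith [hp.1, hp.2]
    have hs : (0:ℝ) < Real.sqrt (1 - p.1 ^ 2) := Real.sqrt_pos.2 hpos
    have hss : Real.sqrt (1 - p.1 ^ 2) ^ 2 = 1 - p.1 ^ 2 := Real.sq_sqrt hpos.le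
    set s := Real.sqrt (1 - p.1 ^ 2) with hsdef
    have hsne : s ≠ 0 := ne_of_gt hs
    set gx := fderiv ℝ g p (1,0) with hgx
    set gy := fderiv ℝ g p (0,1) with hgy
    have hE : EcoefP (PhiCyl g) p = (1 + g p) ^ 2 / (1 - p.1 ^ 2) := by
      rw [EcoefP, hx, mink]
      simp only [Matrix.cons_val_zero, Matrix.cons_val_one, Matrix.head_cons,
        Matrix.cons_val_two, Matrix.tail_cons, Matrix.cons_val_three]
      rw [← hss]
      field_simp
      linear_combination (gx ^ 2 * (s ^ 2 + 1 - p.1 ^ 2) - gx ^ 2 + (1 + g p + gx * p.1) ^ 2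
        - 2 * (1 + g p) * p.1 * gx) * hss
    have hF : FcoefP (PhiCyl g) p = 0 := by
      rw [FcoefP, hx, hy, mink]
      simp only [Matrix.cons_val_zero, Matrix.cons_val_one, Matrix.head_cons,
        Matrix.cons_val_two, Matrix.tail_cons, Matrix.cons_val_three]
      field_simp
      linear_combination (gx * gy) * hss
    have hG : GcoefP (PhiCyl g) p = 1 := by
      rw [GcoefP, hy, mink]
      simp only [Matrix.cons_val_zero, Matrix.cons_val_one, Matrix.head_cons,
        Matrix.cons_val_two, Matrix.tail_cons, Matrix.cons_val_three]
      linear_combination gy ^ 2 * hss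
    rw [hE, hF, hG]
    ring
  refine ⟨key, fun hgne p hp => ?_⟩
  have h1ne : 1 + g p ≠ 0 := fun h => hgne p hp (by linarith)
  have hpos : (0:ℝ) < 1 - p.1 ^ 2 := by nlinarith [hp.1, hp.2]
  constructor
  · rw [key p hp]
    exact div_pos (lt_of_le_of_ne (sq_nonneg _) (Ne.symm (pow_ne_zero 2 h1ne))) hpos
  · obtain ⟨hx, hy⟩ := phiDeriv g hg p hp
    refine LinearIndependent.pair_iff.2 fun a b hab => ?_
    rw [hx, hy] at hab
    have h2 := congrFun hab 2
    simp only [Pi.add_apply, Pi.smul_apply, smul_eq_mul, Matrix.cons_val_two,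
      Matrix.tail_cons, Matrix.head_cons, Pi.zero_apply, mul_zero, mul_one,
      zero_add] at h2
    have hb : b = 0 := by linarith
    subst hb
    have h0 := congrFun hab 0
    have h1 := congrFun hab 1
    simp only [Pi.add_apply, Pi.smul_apply, smul_eq_mul, Matrix.cons_val_zero,
      Matrix.cons_val_one, Matrix.head_cons, Pi.zero_apply, zero_mul, add_zero] at h0 h1
    have ha : a = 0 := by
      by_contra han
      have hgx : fderiv ℝ g p (1,0) = 0 := by
        rcases mul_eq_zero.1 h0 with h | h
        · exact absurd h han
        · exact h
      rw [hgx] at h1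
      have hz : a * (1 + g p) = 0 := by linarith
      rcases mul_eq_zero.1 hz with h | h
      · exact absurd h han
      · exact h1ne h
    exact ⟨ha, rfl⟩
end
end
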